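/- arXiv:2001.09323 — 7 statements merged into one kernel-verified Lean document; each statement's English description precedes it below -/
import Mathlib

section
/- Let λ ∈ ℂ and let ℓ, n, r, s be natural numbers. Then for every x ∈ ℂ: Σ_{k=0}^{n+r} λ^{n+r−k} C(n+r,k) C(ℓ+k+r,r) B_{ℓ+k}(x) + (−1)^{ℓ+n+r+1} Σ_{k=0}^{ℓ+r} λ^{ℓ+r−k} C(ℓ+r,k) C(n+k+r,r) B_{n+k}(1+s−λ−x) = (r+1) Σ_{k=1}^{s} Σ_{j=0}^{r+1} C(n+r,j) C(ℓ+r,r+1−j) (x−k)^{ℓ+j−1} (x+λ−k)^{n+r−j}, with the convention that a term whose binomial coefficient C(ℓ+r,r+1−j) vanishes is zero (this covers the only case ℓ = j = 0 where the exponent ℓ+j−1 would be negative). -/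
open scoped BigOperators
open Finset

noncomputable section

/-- The classical Bernoulli polynomial `B_n(x)` (with `B_1(0) = -1/2`),
evaluated at a complex number `x`. -/
def bernPoly (n : ℕ) (x : ℂ) : ℂ := Polynomial.aeval x (Polynomial.bernoulli n)

end

/-!
Write `p(y + 𝐁) := ∑ₘ pₘ Bₘ(y)` (umbral evaluation, `𝐁ᵐ ↦ Bₘ`) and
`Q := H_r[X^(ℓ+r) (X + λ)^(n+r)]`, where `H_r` is the `r`-th Hasse derivative. Expanding
`(X + λ)^(n+r)` shows that the first sum is `Q(x + 𝐁)`, and the second one is the same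
expression for the polynomial with `ℓ` and `n` swapped. The reflection `Bₘ(1 - y) = (-1)ᵐ Bₘ(y)`
together with translation turns the second sum into `(-1)^(ℓ+n+r) Q(x - s + 𝐁)`, so the left side
is `Q(x + 𝐁) - Q(x - s + 𝐁)`. Since `Bₘ(y + 1) - Bₘ(y) = m yᵐ⁻¹`, this telescopes to
`∑_{k=1}^{s} Q'(x - k)`, and `Q' = (r + 1) H_{r+1}[X^(ℓ+r) (X + λ)^(n+r)]` is expanded by
the Leibniz rule.
-/

open Polynomial

section HasseDeriv

section Semiring

variable {R : Type*} [Semiring R]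

theorem derivative_hasseDeriv (k : ℕ) (p : R[X]) :
    derivative (hasseDeriv k p) = (k + 1) • hasseDeriv (k + 1) p := by
  rw [← hasseDeriv_one', ← LinearMap.comp_apply, hasseDeriv_comp, add_comm 1 k,
    Nat.choose_one_right]
  rfl

theorem hasseDeriv_X_pow (k m : ℕ) :
    hasseDeriv k (X ^ m : R[X]) = m.choose k • X ^ (m - k) := by
  rw [X_pow_eq_monomial, hasseDeriv_monomial, mul_one, ← C_mul_X_pow_eq_monomial, map_natCast,
    nsmul_eq_mul]

end Semiring

variable {R : Type*} [CommRing R]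

theorem iterate_derivative_comp_C_sub_X (p : R[X]) (c : R) (k : ℕ) :
    derivative^[k] (p.comp (C c - X)) = (-1 : R) ^ k • (derivative^[k] p).comp (C c - X) := by
  induction k generalizing p with
  | zero => simp
  | succ k ih => simp [ih (derivative p), derivative_comp, pow_succ]

variable [IsDomain R] [CharZero R]

theorem hasseDeriv_eq_of_iterate_derivative_eq_factorial_smul {k : ℕ} {p q : R[X]}
    (h : derivative^[k] p = k.factorial • q) : hasseDeriv k p = q := by
  apply smul_right_injective R[X] (Nat.factorial_ne_zero k)
  dsimp only
  rw [← h, ← factorial_smul_hasseDeriv]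
  rfl

theorem hasseDeriv_X_add_C_pow (k m : ℕ) (c : R) :
    hasseDeriv k ((X + C c) ^ m) = m.choose k • (X + C c) ^ (m - k) := by
  apply hasseDeriv_eq_of_iterate_derivative_eq_factorial_smul
  rw [iterate_derivative_X_add_pow, Nat.descFactorial_eq_factorial_mul_choose, mul_smul]

theorem hasseDeriv_comp_C_sub_X (k : ℕ) (p : R[X]) (c : R) :
    hasseDeriv k (p.comp (C c - X)) = (-1 : R) ^ k • (hasseDeriv k p).comp (C c - X) := by
  apply hasseDeriv_eq_of_iterate_derivative_eq_factorial_smul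
  rw [iterate_derivative_comp_C_sub_X, ← factorial_smul_hasseDeriv, LinearMap.smul_apply,
    smul_comp, smul_comm]

theorem eval_derivative_hasseDeriv_X_pow_mul_X_add_C_pow (a b k : ℕ) (c t : R) :
    (derivative (hasseDeriv k (X ^ a * (X + C c) ^ b))).eval t =
      (k + 1) * ∑ j ∈ range (k + 2),
        (b.choose j : R) * a.choose (k + 1 - j) * t ^ (a - (k + 1 - j)) * (t + c) ^ (b - j) := by
  rw [derivative_hasseDeriv, mul_comm, hasseDeriv_mul,
    Nat.sum_antidiagonal_eq_sum_range_succ (fun i j => hasseDeriv i _ * hasseDeriv j _)]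
  simp only [nsmul_eq_mul, eval_finsetSum, eval_mul, hasseDeriv_X_pow, hasseDeriv_X_add_C_pow,
    eval_pow, eval_X, eval_add, eval_C, eval_natCast, Nat.cast_succ, eval_one]
  congr 1
  exact sum_congr rfl fun j _ => by ring

end HasseDeriv

theorem X_add_C_pow_eq_sum_monomial {R : Type*} [CommSemiring R] (c : R) (m : ℕ) :
    (X + C c) ^ m = ∑ i ∈ range (m + 1), monomial i (c ^ (m - i) * m.choose i) := by
  rw [add_pow]
  refine sum_congr rfl fun i _ => ?_
  rw [← C_mul_X_pow_eq_monomial, map_mul, map_pow, map_natCast]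
  ring

theorem bernPoly_add_one (m : ℕ) (y : ℂ) :
    bernPoly m (y + 1) = bernPoly m y + m * y ^ (m - 1) := by
  simpa [bernPoly, aeval_comp, add_comm] using congrArg (aeval y) (bernoulli_comp_one_add_X m)

theorem bernPoly_one_sub (m : ℕ) (y : ℂ) :
    bernPoly m (1 - y) = (-1) ^ m * bernPoly m y := by
  simpa [bernPoly, aeval_comp] using congrArg (aeval y) (bernoulli_comp_one_sub_X m)

/-- `p ↦ ∑ₘ pₘ Bₘ(y)`, defined as `p(X + y)` evaluated at `𝐁` (`Xᵐ ↦ Bₘ`) so that translation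
(`bernoulliEval_add`) is immediate. -/
noncomputable def bernoulliEval (y : ℂ) : ℂ[X] →ₗ[ℂ] ℂ :=
  (lsum fun m => (_root_.bernoulli m : ℂ) • LinearMap.id) ∘ₗ taylor y

theorem bernoulliEval_monomial (y a : ℂ) (m : ℕ) :
    bernoulliEval y (monomial m a) = a * bernPoly m y := by
  rw [bernPoly, Polynomial.bernoulli, map_sum, mul_sum, bernoulliEval, LinearMap.comp_apply,
    taylor_monomial, X_add_C_pow_eq_sum_monomial, mul_sum, map_sum]
  refine sum_congr rfl fun i _ => ?_
  simp only [C_mul_monomial, lsum_apply, LinearMap.smul_apply, LinearMap.id_coe, id_eq,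
    smul_eq_mul, mul_zero, sum_monomial_index, aeval_monomial, eq_ratCast, Rat.cast_mul,
    Rat.cast_natCast]
  ring

theorem bernoulliEval_add (y c : ℂ) (p : ℂ[X]) :
    bernoulliEval (y + c) p = bernoulliEval y (taylor c p) := by
  simp only [bernoulliEval, LinearMap.comp_apply, taylor_taylor]

theorem bernoulliEval_add_one (y : ℂ) (p : ℂ[X]) :
    bernoulliEval (y + 1) p = bernoulliEval y p + (derivative p).eval y := by
  induction p using Polynomial.induction_on' with
  | add p q hp hq => simp only [map_add, hp, hq, eval_add]; ring
  | monomial m a =>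
    rw [bernoulliEval_monomial, bernoulliEval_monomial, bernPoly_add_one, derivative_monomial,
      eval_monomial]
    ring

theorem bernoulliEval_one_sub (y : ℂ) (p : ℂ[X]) :
    bernoulliEval (1 - y) p = bernoulliEval y (p.comp (-X)) := by
  induction p using Polynomial.induction_on' with
  | add p q hp hq => simp only [map_add, hp, hq, add_comp]
  | monomial m a =>
    rw [monomial_comp, neg_pow, ← mul_assoc, show C a * (-1) ^ m = C (a * (-1) ^ m) by simp,
      C_mul_X_pow_eq_monomial, bernoulliEval_monomial, bernoulliEval_monomial, bernPoly_one_sub]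
    ring

theorem bernoulliEval_sub_sub_natCast (x : ℂ) (s : ℕ) (p : ℂ[X]) :
    bernoulliEval x p - bernoulliEval (x - s) p = ∑ k ∈ Icc 1 s, (derivative p).eval (x - k) := by
  induction s with
  | zero => simp
  | succ s ih =>
    have h := bernoulliEval_add_one (x - (s + 1)) p
    rw [show x - (s + 1) + 1 = x - s by ring] at h
    rw [sum_Icc_succ_top (Nat.le_add_left 1 s), ← ih, Nat.cast_succ]
    linear_combination h

theorem bernoulliEval_hasseDeriv_X_pow_mul_X_add_C_pow (a b r : ℕ) (c y : ℂ) :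
    bernoulliEval y (hasseDeriv r (X ^ (a + r) * (X + C c) ^ (b + r))) =
      ∑ k ∈ range (b + r + 1), c ^ (b + r - k) * ((b + r).choose k : ℂ) *
        ((a + k + r).choose r : ℂ) * bernPoly (a + k) y := by
  rw [X_add_C_pow_eq_sum_monomial, mul_sum, map_sum, map_sum]
  refine sum_congr rfl fun k _ => ?_
  rw [X_pow_eq_monomial, monomial_mul_monomial, hasseDeriv_monomial, bernoulliEval_monomial,
    one_mul, show a + r + k = a + k + r by ring, Nat.add_sub_cancel]
  ring

theorem bernoulliEval_one_sub_sub_hasseDeriv_X_pow_mul_X_add_C_pow (a b k : ℕ) (c y : ℂ) :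
    bernoulliEval (1 - y - c) (hasseDeriv k (X ^ b * (X + C c) ^ a)) =
      (-1) ^ (a + b + k) * bernoulliEval y (hasseDeriv k (X ^ a * (X + C c) ^ b)) := by
  have hq : C (-c) - X = -(X + C c) := by rw [map_neg]; ring
  have hP : (X ^ b * (X + C c) ^ a).comp (C (-c) - X) =
      (-1 : ℂ) ^ (a + b) • (X ^ a * (X + C c) ^ b) := by
    rw [hq, mul_comp, pow_comp, pow_comp, X_comp, add_comp, X_comp, C_comp,
      show -(X + C c) + C c = -X by ring, neg_pow, neg_pow, smul_eq_C_mul, map_pow, map_neg, C_1]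
    ring
  calc bernoulliEval (1 - y - c) (hasseDeriv k (X ^ b * (X + C c) ^ a))
      = bernoulliEval y ((hasseDeriv k (X ^ b * (X + C c) ^ a)).comp (C (-c) - X)) := by
        rw [sub_sub, bernoulliEval_one_sub, bernoulliEval_add, taylor_apply, comp_assoc, hq]
        congr 2
        simp only [neg_comp, X_comp]
    _ = bernoulliEval y ((-1 : ℂ) ^ k • (-1 : ℂ) ^ k •
          (hasseDeriv k (X ^ b * (X + C c) ^ a)).comp (C (-c) - X)) := by
        rw [smul_smul, ← mul_pow, neg_one_mul, neg_neg, one_pow, one_smul]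
    _ = _ := by
        rw [← hasseDeriv_comp_C_sub_X, hP, map_smul, map_smul, map_smul, smul_eq_mul, smul_eq_mul,
          pow_add]
        ring

/-- Corollary (generalization of Gessel's formula to classical Bernoulli polynomials).
A term whose binomial coefficient `C(ℓ+r, r+1-j)` vanishes is zero; this covers the only
case `ℓ = j = 0` where the exponent `ℓ+j-1` would be negative (here `ℓ+j-1` is truncated
natural subtraction, which is harmless since the corresponding term vanishes). -/
theorem gessel_poly_generalization (lam : ℂ) (ℓ n r s : ℕ) (x : ℂ) :
    (∑ k ∈ Finset.range (n + r + 1),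
        lam ^ (n + r - k) * ((n + r).choose k : ℂ) * ((ℓ + k + r).choose r : ℂ) *
          bernPoly (ℓ + k) x) +
      (-1 : ℂ) ^ (ℓ + n + r + 1) *
        ∑ k ∈ Finset.range (ℓ + r + 1),
          lam ^ (ℓ + r - k) * ((ℓ + r).choose k : ℂ) * ((n + k + r).choose r : ℂ) *
            bernPoly (n + k) (1 + (s : ℂ) - lam - x) =
    ((r : ℂ) + 1) *
      ∑ k ∈ Finset.Icc 1 s, ∑ j ∈ Finset.range (r + 2),
        ((n + r).choose j : ℂ) * ((ℓ + r).choose (r + 1 - j) : ℂ) *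
          (x - (k : ℂ)) ^ (ℓ + j - 1) * (x + lam - (k : ℂ)) ^ (n + r - j) := by
  set Q := hasseDeriv r (X ^ (ℓ + r) * (X + C lam) ^ (n + r))
  rw [← bernoulliEval_hasseDeriv_X_pow_mul_X_add_C_pow,
    ← bernoulliEval_hasseDeriv_X_pow_mul_X_add_C_pow,
    show 1 + (s : ℂ) - lam - x = 1 - (x - s) - lam by ring,
    bernoulliEval_one_sub_sub_hasseDeriv_X_pow_mul_X_add_C_pow]
  calc bernoulliEval x Q +
        (-1) ^ (ℓ + n + r + 1) * ((-1) ^ (ℓ + r + (n + r) + r) * bernoulliEval (x - s) Q)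
      = bernoulliEval x Q - bernoulliEval (x - s) Q := by
        rw [← mul_assoc, ← pow_add, Odd.neg_one_pow ⟨ℓ + n + 2 * r, by ring⟩]
        ring
    _ = ∑ k ∈ Icc 1 s, (derivative Q).eval (x - k) := bernoulliEval_sub_sub_natCast x s Q
    _ = _ := by
        rw [mul_sum]
        refine sum_congr rfl fun k _ => ?_
        rw [eval_derivative_hasseDeriv_X_pow_mul_X_add_C_pow, sub_add_eq_add_sub]
        congr 1
        refine sum_congr rfl fun j hj => ?_
        rw [show ℓ + r - (r + 1 - j) = ℓ + j - 1 by grind]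
end

section
/- Let m ≥ 1 be an integer and let ℓ, n, r be natural numbers. Then Σ_{k=0}^{n+r} m^{n+r−k} C(n+r,k) C(ℓ+k+r,r) B_{ℓ+k} + (−1)^{ℓ+n+r+1} Σ_{k=0}^{ℓ+r} m^{ℓ+r−k} C(ℓ+r,k) C(n+k+r,r) B_{n+k} = (r+1) Σ_{k=1}^{m−1} Σ_{j=0}^{r+1} (−1)^{ℓ+j−1} C(n+r,j) C(ℓ+r,r+1−j) k^{ℓ+j−1} (m−k)^{n+r−j}, with the convention that a term whose binomial coefficient C(ℓ+r,r+1−j) vanishes is zero (this covers the only case ℓ = j = 0 where the exponent ℓ+j−1 would be negative). -/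
/-!
Write `z = X - Y`. The Bernoulli generating function satisfies `z^r B(z) (e^z - 1) = z^(r+1)`,
and multiplying by `e^z = e^X e^(-Y)` shifts `e^((m-k)X + kY)` to `e^((m-k+1)X + (k-1)Y)`, so the
sum over `k` telescopes:
`z^(r+1) ∑_{k=1}^{m-1} e^((m-k)X + kY) = z^r B(z) e^(mX) - z^r B'(z) e^(mY)`,
where `B'(z) = B(z) + z = B(-z)`. Reading off the coefficient of `X^(n+r) Y^(ℓ+r) / ((n+r)! (ℓ+r)!)`
turns the left side into the right-hand side of the identity and the two terms on the right into
the two Bernoulli sums.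
-/

open scoped BigOperators Nat
open Finset

theorem Finset.Nat.sum_antidiagonal_choose_mul_choose {R : Type*} [CommSemiring R]
    (a b j : ℕ) (g : ℕ → ℕ → R) :
    ∑ q ∈ antidiagonal j, ((a + q.1).choose a * (b + q.2).choose b : R) * g (a + q.1) (b + q.2) =
      ∑ x ∈ antidiagonal (a + b + j), (x.1.choose a * x.2.choose b : R) * g x.1 x.2 := by
  refine sum_of_injOn (fun q => (a + q.1, b + q.2)) ?_ ?_ ?_ fun _ _ => rfl
  · intro q _ q' _ h
    simp only [Prod.mk.injEq, Nat.add_left_cancel_iff] at h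
    exact Prod.ext h.1 h.2
  · intro q hq
    simp only [mem_coe, HasAntidiagonal.mem_antidiagonal] at hq ⊢
    omega
  · rintro ⟨s, t⟩ hst hnot
    rw [HasAntidiagonal.mem_antidiagonal] at hst
    have : s < a ∨ t < b := by
      by_contra! h
      exact hnot ⟨(s - a, t - b), by simp; omega, by simp; omega⟩
    rcases this with h | h <;> simp [Nat.choose_eq_zero_of_lt h]

namespace PowerSeries

section CommRing

variable {R : Type*} [CommRing R]

theorem coeff_coeff_mul (i j : ℕ) (Φ Ψ : R⟦X⟧⟦X⟧) :
    coeff j (coeff i (Φ * Ψ)) = ∑ p ∈ antidiagonal i, ∑ q ∈ antidiagonal j,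
      coeff q.1 (coeff p.1 Φ) * coeff q.2 (coeff p.2 Ψ) := by
  simp only [coeff_mul, map_sum]

/-- `diffSubst f = f (X - Y)`, where a series in two variables is an element of `R⟦X⟧⟦X⟧`
whose outer variable is `X` and whose coefficients are series in `Y`. -/
noncomputable def diffSubst : R⟦X⟧ →+* R⟦X⟧⟦X⟧ where
  toFun := fun f => mk fun i => mk fun j => (-1) ^ j * (i + j).choose i * coeff (i + j) f
  map_one' := by
    ext i j
    rcases i with _ | i <;> rcases j with _ | j <;> simp [coeff_one]
  map_mul' f g := by
    ext i j
    simp only [coeff_coeff_mul, coeff_mk, coeff_mul (n := i + j)]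
    symm
    calc ∑ p ∈ antidiagonal i, ∑ q ∈ antidiagonal j,
          (-1) ^ q.1 * ((p.1 + q.1).choose p.1 : R) * coeff (p.1 + q.1) f *
            ((-1) ^ q.2 * ((p.2 + q.2).choose p.2 : R) * coeff (p.2 + q.2) g)
        = ∑ p ∈ antidiagonal i, (-1) ^ j * ∑ q ∈ antidiagonal j,
            ((p.1 + q.1).choose p.1 * (p.2 + q.2).choose p.2 : R) *
              (coeff (p.1 + q.1) f * coeff (p.2 + q.2) g) := by
          refine sum_congr rfl fun p _ => ?_
          rw [mul_sum]
          refine sum_congr rfl fun q hq => ?_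
          rw [← HasAntidiagonal.mem_antidiagonal.mp hq, pow_add]
          ring
      _ = ∑ p ∈ antidiagonal i, (-1) ^ j * ∑ x ∈ antidiagonal (i + j),
            (x.1.choose p.1 * x.2.choose p.2 : R) * (coeff x.1 f * coeff x.2 g) := by
          refine sum_congr rfl fun p hp => ?_
          rw [← HasAntidiagonal.mem_antidiagonal.mp hp]
          exact congrArg _ (Finset.Nat.sum_antidiagonal_choose_mul_choose p.1 p.2 j
            fun s t => coeff s f * coeff t g)
      _ = (-1) ^ j * (i + j).choose i * ∑ x ∈ antidiagonal (i + j), coeff x.1 f * coeff x.2 g := by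
          rw [← mul_sum, sum_comm, mul_assoc]
          congr 1
          rw [mul_sum]
          refine sum_congr rfl fun x hx => ?_
          rw [← sum_mul, ← HasAntidiagonal.mem_antidiagonal.mp hx, Nat.add_choose_eq]
          push_cast
          rfl
  map_zero' := by ext; simp
  map_add' f g := by ext; simp [mul_add]

theorem coeff_coeff_diffSubst (f : R⟦X⟧) (i j : ℕ) :
    coeff j (coeff i (diffSubst f)) = (-1) ^ j * (i + j).choose i * coeff (i + j) f := by
  simp [diffSubst]

theorem diffSubst_X : diffSubst (X : R⟦X⟧) = X - C X := by
  ext i j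
  rw [coeff_coeff_diffSubst, map_sub, map_sub, coeff_C, coeff_X, coeff_X]
  rcases i with _ | _ | i <;> rcases j with _ | _ | j <;> simp [coeff_X]; omega

noncomputable def egfCoeff (a b : ℕ) : R⟦X⟧⟦X⟧ →+ R where
  toFun Φ := a ! * b ! * coeff b (coeff a Φ)
  map_zero' := by simp
  map_add' _ _ := by simp [mul_add]

theorem egfCoeff_apply (a b : ℕ) (Φ : R⟦X⟧⟦X⟧) :
    egfCoeff a b Φ = a ! * b ! * coeff b (coeff a Φ) := rfl

theorem egfCoeff_diffSubst (f : R⟦X⟧) (i j : ℕ) :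
    egfCoeff i j (diffSubst f) = (-1) ^ j * ((i + j)! * coeff (i + j) f) := by
  rw [egfCoeff_apply, coeff_coeff_diffSubst, ← Nat.add_choose_mul_factorial_mul_factorial,
    Nat.choose_symm_add]
  push_cast
  ring

theorem factorial_mul_coeff_X_pow_mul (f : R⟦X⟧) (r s : ℕ) :
    s ! * coeff s (X ^ r * f) = s.descFactorial r * ((s - r)! * coeff (s - r) f) := by
  rw [coeff_X_pow_mul']
  split_ifs with h
  · rw [← Nat.factorial_mul_descFactorial h]
    push_cast
    ring
  · simp [Nat.descFactorial_eq_zero_iff_lt.mpr (not_le.mp h)]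

end CommRing

/-- `biexp c d = exp (c X + d Y)`. -/
noncomputable def biexp (c d : ℚ) : ℚ⟦X⟧⟦X⟧ := rescale (C c) (exp ℚ⟦X⟧) * C (rescale d (exp ℚ))

theorem coeff_coeff_biexp (c d : ℚ) (i j : ℕ) :
    coeff j (coeff i (biexp c d)) = c ^ i / i ! * (d ^ j / j !) := by
  simp only [biexp, coeff_mul_C, coeff_rescale, coeff_exp]
  rw [← map_pow, ← algebraMap_eq (R := ℚ), ← map_mul, algebraMap_eq,
    coeff_C_mul, coeff_rescale, coeff_exp]
  simp [div_eq_mul_inv]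

theorem biexp_mul (c d c' d' : ℚ) : biexp c d * biexp c' d' = biexp (c + c') (d + d') := by
  rw [biexp, biexp, biexp, mul_mul_mul_comm, ← map_mul, exp_mul_exp_eq_exp_add,
    exp_mul_exp_eq_exp_add, map_add]

theorem biexp_zero_right (c : ℚ) : biexp c 0 = rescale (C c) (exp ℚ⟦X⟧) := by
  simp [biexp]

theorem biexp_zero_left (d : ℚ) : biexp 0 d = C (rescale d (exp ℚ)) := by
  simp [biexp]

theorem diffSubst_exp : diffSubst (exp ℚ) = biexp 1 (-1) := by
  ext i j
  rw [coeff_coeff_diffSubst, coeff_coeff_biexp, coeff_exp,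
    Nat.cast_choose ℚ (Nat.le_add_right i j)]
  simp
  field_simp

theorem biexp_one_neg_one_sub_one_mul_sum (m : ℕ) :
    (biexp 1 (-1) - 1) * ∑ k ∈ range m, biexp (m - (k + 1 : ℕ)) (k + 1 : ℕ) =
      biexp m 0 - biexp 0 m := by
  have hstep : ∀ k : ℕ,
      biexp 1 (-1) * biexp (m - (k + 1 : ℕ)) (k + 1 : ℕ) = biexp (m - k) k := by
    intro k
    rw [biexp_mul]
    congr 1 <;> push_cast <;> ring
  rw [sub_mul, one_mul, mul_sum, ← sum_sub_distrib]
  simp only [hstep]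
  rw [sum_range_sub' (fun k : ℕ => biexp (m - k) k)]
  simp

theorem sum_range_biexp_eq_sum_Icc_add (m : ℕ) (hm : 1 ≤ m) :
    ∑ k ∈ range m, biexp (m - (k + 1 : ℕ)) (k + 1 : ℕ) =
      ∑ k ∈ Icc 1 (m - 1), biexp (m - k) k + biexp 0 m := by
  obtain ⟨m, rfl⟩ : ∃ m', m = m' + 1 := ⟨m - 1, by omega⟩
  rw [sum_range_succ, Nat.add_sub_cancel, ← Finset.Ico_add_one_right_eq_Icc, sum_Ico_eq_sum_range]
  simp [add_comm]

theorem egfCoeff_mul_biexp_zero_right (Φ : ℚ⟦X⟧⟦X⟧) (c : ℚ) (a b : ℕ) :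
    egfCoeff a b (Φ * biexp c 0) =
      ∑ i ∈ range (a + 1), a.choose i * egfCoeff i b Φ * c ^ (a - i) := by
  rw [biexp_zero_right, egfCoeff_apply, coeff_mul, Finset.Nat.sum_antidiagonal_eq_sum_range_succ
    (fun i i' => coeff i Φ * coeff i' (rescale (C c) (exp ℚ⟦X⟧))), map_sum, mul_sum]
  refine sum_congr rfl fun i hi => ?_
  rw [coeff_rescale, coeff_exp, ← map_pow, ← algebraMap_eq (R := ℚ), ← map_mul, algebraMap_eq,
    coeff_mul_C, egfCoeff_apply, Nat.cast_choose ℚ (Nat.lt_succ_iff.mp (mem_range.mp hi))]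
  field_simp

theorem egfCoeff_mul_biexp_zero_left (Φ : ℚ⟦X⟧⟦X⟧) (d : ℚ) (a b : ℕ) :
    egfCoeff a b (Φ * biexp 0 d) =
      ∑ j ∈ range (b + 1), b.choose j * egfCoeff a j Φ * d ^ (b - j) := by
  rw [biexp_zero_left, egfCoeff_apply, coeff_mul_C, coeff_mul,
    Finset.Nat.sum_antidiagonal_eq_sum_range_succ
      (fun j j' => coeff j (coeff a Φ) * coeff j' (rescale d (exp ℚ))), mul_sum]
  refine sum_congr rfl fun j hj => ?_
  rw [coeff_rescale, coeff_exp, egfCoeff_apply,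
    Nat.cast_choose ℚ (Nat.lt_succ_iff.mp (mem_range.mp hj))]
  simp only [Algebra.algebraMap_self, RingHom.id_apply]
  field_simp

theorem egfCoeff_X_pow_mul_C_X_pow_mul_biexp (c d : ℚ) (i j a b : ℕ) :
    egfCoeff a b (X ^ i * C (X ^ j) * biexp c d) =
      a.descFactorial i * b.descFactorial j * c ^ (a - i) * d ^ (b - j) := by
  rw [egfCoeff_apply, mul_assoc (X ^ i), coeff_X_pow_mul']
  split_ifs with hi
  · rw [coeff_C_mul, coeff_X_pow_mul']
    split_ifs with hj
    · rw [coeff_coeff_biexp, ← Nat.factorial_mul_descFactorial hi,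
        ← Nat.factorial_mul_descFactorial hj]
      push_cast
      field_simp
    · simp [Nat.descFactorial_eq_zero_iff_lt.mpr (not_le.mp hj)]
  · simp [Nat.descFactorial_eq_zero_iff_lt.mpr (not_le.mp hi)]

end PowerSeries

open PowerSeries

theorem bernoulliPowerSeries_add_X : bernoulliPowerSeries ℚ + X = bernoulli'PowerSeries ℚ := by
  have hne : exp ℚ - 1 ≠ 0 := fun h => by simpa using congrArg (coeff 1) h
  refine mul_right_cancel₀ hne ?_
  rw [add_mul, bernoulliPowerSeries_mul_exp_sub_one, bernoulli'PowerSeries_mul_exp_sub_one]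
  ring

theorem factorial_mul_coeff_bernoulliPowerSeries (n : ℕ) :
    n ! * coeff n (bernoulliPowerSeries ℚ) = bernoulli n := by
  simp [bernoulliPowerSeries]
  field_simp

theorem factorial_mul_coeff_bernoulli'PowerSeries (n : ℕ) :
    n ! * coeff n (bernoulli'PowerSeries ℚ) = bernoulli' n := by
  simp [bernoulli'PowerSeries]
  field_simp

theorem X_sub_C_X_pow_mul_sum_biexp (r m : ℕ) (hm : 1 ≤ m) :
    (X - C X : ℚ⟦X⟧⟦X⟧) ^ (r + 1) * ∑ k ∈ Icc 1 (m - 1), biexp (m - k) k =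
      diffSubst (X ^ r * bernoulliPowerSeries ℚ) * biexp m 0 -
        diffSubst (X ^ r * bernoulli'PowerSeries ℚ) * biexp 0 m := by
  set F := diffSubst (X ^ r * bernoulliPowerSeries ℚ)
  have hP : (X - C X : ℚ⟦X⟧⟦X⟧) ^ (r + 1) = F * (biexp 1 (-1) - 1) := by
    rw [← diffSubst_X, ← diffSubst_exp, ← map_pow, ← map_one diffSubst, ← map_sub, ← map_mul,
      mul_assoc, bernoulliPowerSeries_mul_exp_sub_one, pow_succ]
  have hF' : diffSubst (X ^ r * bernoulli'PowerSeries ℚ) = F + (X - C X) ^ (r + 1) := by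
    rw [← bernoulliPowerSeries_add_X, mul_add, map_add, ← diffSubst_X, ← map_pow, pow_succ]
  have htele := biexp_one_neg_one_sub_one_mul_sum m
  rw [sum_range_biexp_eq_sum_Icc_add m hm] at htele
  rw [hF', add_mul, ← sub_sub, ← mul_sub, ← htele, hP]
  ring

theorem sum_choose_mul_bernoulli_eq_egfCoeff (ℓ n r : ℕ) (c : ℚ) :
    ∑ k ∈ range (n + r + 1),
        c ^ (n + r - k) * (n + r).choose k * (ℓ + k + r).choose r * bernoulli (ℓ + k) =
      (-1) ^ (ℓ + r) / r ! *
        egfCoeff (n + r) (ℓ + r) (diffSubst (X ^ r * bernoulliPowerSeries ℚ) * biexp c 0) := by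
  rw [egfCoeff_mul_biexp_zero_right, mul_sum]
  refine sum_congr rfl fun k _ => ?_
  rw [egfCoeff_diffSubst, factorial_mul_coeff_X_pow_mul, show k + (ℓ + r) - r = ℓ + k by omega,
    factorial_mul_coeff_bernoulliPowerSeries, Nat.descFactorial_eq_factorial_mul_choose,
    show k + (ℓ + r) = ℓ + k + r by ring]
  push_cast
  field_simp
  simp [pow_right_comm _ (ℓ + r) 2]

theorem sum_choose_mul_bernoulli_eq_egfCoeff' (ℓ n r : ℕ) (c : ℚ) :
    ∑ k ∈ range (ℓ + r + 1),
        c ^ (ℓ + r - k) * (ℓ + r).choose k * (n + k + r).choose r * bernoulli (n + k) =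
      (-1) ^ n / r ! *
        egfCoeff (n + r) (ℓ + r) (diffSubst (X ^ r * bernoulli'PowerSeries ℚ) * biexp 0 c) := by
  rw [egfCoeff_mul_biexp_zero_left, mul_sum]
  refine sum_congr rfl fun k _ => ?_
  rw [egfCoeff_diffSubst, factorial_mul_coeff_X_pow_mul, show n + r + k - r = n + k by omega,
    factorial_mul_coeff_bernoulli'PowerSeries, bernoulli'_eq_bernoulli,
    Nat.descFactorial_eq_factorial_mul_choose, show n + r + k = n + k + r by ring]
  push_cast
  field_simp
  ring_nf
  simp [pow_mul']

theorem sum_choose_mul_choose_eq_egfCoeff (ℓ n r : ℕ) (c d : ℚ) :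
    ((r : ℚ) + 1) * ∑ j ∈ range (r + 2),
        (-1) ^ (ℓ + j - 1) * (n + r).choose j * (ℓ + r).choose (r + 1 - j) * d ^ (ℓ + j - 1) *
          c ^ (n + r - j) =
      (-1) ^ (ℓ + r) / r ! * egfCoeff (n + r) (ℓ + r) ((X - C X) ^ (r + 1) * biexp c d) := by
  have hterm : ∀ j, (-1 : ℚ⟦X⟧⟦X⟧) ^ (j + (r + 1)) * X ^ j * C X ^ (r + 1 - j) *
      ((r + 1).choose j : ℚ⟦X⟧⟦X⟧) =
        ((-1) ^ (j + (r + 1)) * (r + 1).choose j : ℤ) • (X ^ j * C (X ^ (r + 1 - j))) := by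
    intro j
    rw [zsmul_eq_mul, map_pow]
    push_cast
    ring
  rw [sub_pow, sum_mul, map_sum, mul_sum, mul_sum]
  refine sum_congr rfl fun j hj => ?_
  have hj : j ≤ r + 1 := Nat.lt_succ_iff.mp (mem_range.mp hj)
  rw [hterm, smul_mul_assoc, map_zsmul, egfCoeff_X_pow_mul_C_X_pow_mul_biexp, zsmul_eq_mul,
    Nat.descFactorial_eq_factorial_mul_choose, Nat.descFactorial_eq_factorial_mul_choose]
  push_cast
  rcases Nat.eq_zero_or_pos (ℓ + j) with h0 | hpos
  · obtain ⟨rfl, rfl⟩ : ℓ = 0 ∧ j = 0 := by omega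
    simp
  have hsign : (-1 : ℚ) ^ (ℓ + r) * (-1) ^ (j + (r + 1)) = (-1) ^ (ℓ + j - 1) := by
    rw [← pow_add]
    exact neg_one_pow_congr (by simp only [Nat.even_iff]; omega)
  have hfact : ((r : ℚ) + 1) = (r + 1).choose j * j ! * (r + 1 - j)! / r ! := by
    rw [eq_div_iff (by positivity)]
    exact_mod_cast ((Nat.choose_mul_factorial_mul_factorial hj).trans (Nat.factorial_succ r)).symm
  rw [hfact, ← hsign, show ℓ + r - (r + 1 - j) = ℓ + j - 1 by omega]
  field_simp

/-- Gessel's identity (2013): for an integer `m ≥ 1` and `ℓ, n, r ∈ ℕ`,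
`S_{n,ℓ,r}^{(1)}(m,0,0) = (r+1) ∑_{k=1}^{m-1} ∑_{j=0}^{r+1} (-1)^{ℓ+j-1}
C(n+r,j) C(ℓ+r,r+1-j) k^{ℓ+j-1} (m-k)^{n+r-j}`.
Terms whose binomial coefficient `C(ℓ+r,r+1-j)` vanishes are zero; this covers the only
case `ℓ = j = 0` where the exponent `ℓ+j-1` would be negative (here truncated
natural subtraction is used, which is harmless since the corresponding term vanishes). -/
theorem gessel_identity (m : ℕ) (hm : 1 ≤ m) (ℓ n r : ℕ) :
    (∑ k ∈ Finset.range (n + r + 1),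
        (m : ℚ) ^ (n + r - k) * ((n + r).choose k : ℚ) * ((ℓ + k + r).choose r : ℚ) *
          bernoulli (ℓ + k)) +
      (-1 : ℚ) ^ (ℓ + n + r + 1) *
        ∑ k ∈ Finset.range (ℓ + r + 1),
          (m : ℚ) ^ (ℓ + r - k) * ((ℓ + r).choose k : ℚ) * ((n + k + r).choose r : ℚ) *
            bernoulli (n + k) =
    ((r : ℚ) + 1) *
      ∑ k ∈ Finset.Icc 1 (m - 1), ∑ j ∈ Finset.range (r + 2),
        (-1 : ℚ) ^ (ℓ + j - 1) * ((n + r).choose j : ℚ) * ((ℓ + r).choose (r + 1 - j) : ℚ) *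
          (k : ℚ) ^ (ℓ + j - 1) * ((m : ℚ) - (k : ℚ)) ^ (n + r - j) := by
  have hsign : (-1 : ℚ) ^ (ℓ + n + r + 1) * ((-1) ^ n / r !) = -((-1) ^ (ℓ + r) / r !) := by
    rw [← mul_div_assoc, ← neg_div, ← pow_add, neg_eq_neg_one_mul ((-1 : ℚ) ^ (ℓ + r)),
      ← pow_succ']
    exact congrArg (· / _) (neg_one_pow_congr (by simp only [Nat.even_iff]; omega))
  rw [sum_choose_mul_bernoulli_eq_egfCoeff, sum_choose_mul_bernoulli_eq_egfCoeff', mul_sum]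
  calc _ = (-1 : ℚ) ^ (ℓ + r) / r ! * egfCoeff (n + r) (ℓ + r)
          ((X - C X) ^ (r + 1) * ∑ k ∈ Icc 1 (m - 1), biexp (m - k) k) := by
        rw [X_sub_C_X_pow_mul_sum_biexp r m hm, map_sub, ← mul_assoc, hsign]
        ring
    _ = _ := by
        rw [mul_sum, map_sum, mul_sum]
        exact sum_congr rfl fun k _ => (sum_choose_mul_choose_eq_egfCoeff ℓ n r _ _).symm
end

section
/- Let m ≥ 1 be an integer, n a natural number, and r an odd natural number. Then Σ_{k=0}^{n+r} m^{n+r−k} C(n+r,k) C(n+k+r,r) B_{n+k} = (1/2)(r+1) Σ_{k=1}^{m−1} Σ_{j=0}^{r+1} C(n+r,j) C(n+r,r+1−j) k^{j+n−1} (k−m)^{n+r−j}, with the convention that a term whose binomial coefficient C(n+r,r+1−j) vanishes is zero (this covers the only case n = j = 0 where the exponent j+n−1 would be negative). -/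
/-!
Let `L = bernoulliUmbra` be the linear functional on `ℚ[X]` sending `X ^ t` to `B_t`. The
identity `∑_{i<t} C(t,i) B_i = [t = 1]` gives `L (p (X + 1)) = L p + p'(0)`, hence the telescoped
`∑_{k<m} p'(k) = L (p (X + m)) - L p`; the vanishing of the odd `B_t`, `t > 1`, gives
`L p - L (p (-X)) = -p'(0)`.

`H = X^N (X - m)^N` with `N = n + r` is invariant under `x ↦ m - x`, so for odd `r` the derivative
`P = H^{(r)}` is antisymmetric, `P (X + m) = -P (-X)`, and the two formulas combine to
`∑_{k=1}^{m-1} P'(k) = 2 L (P (X + m))`. Leibniz' rule turns the left side into `(r+1)!` times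
the double sum of the right-hand side, and expanding `(X + m)^N X^N` turns `L (P (X + m))` into
`r!` times the left-hand side.
-/

open Finset

namespace Polynomial

section CommSemiring

variable {R : Type*} [CommSemiring R]

theorem iterate_derivative_taylor (c : R) (p : R[X]) (k : ℕ) :
    derivative^[k] (taylor c p) = taylor c (derivative^[k] p) := by
  have hcomm : Function.Commute derivative (taylor c) := fun q => by
    simp only [taylor_apply, derivative_comp, derivative_add, derivative_X, derivative_C,
      add_zero, one_mul]
  exact (hcomm.iterate_left k) p

end CommSemiring

section CommRing

variable {R : Type*} [CommRing R]

theorem iterate_derivative_comp_C_sub_X (p : R[X]) (c : R) (k : ℕ) :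
    derivative^[k] (p.comp (C c - X)) = (-1) ^ k * (derivative^[k] p).comp (C c - X) := by
  induction k generalizing p with
  | zero => simp
  | succ k ih => simp [ih (derivative p), derivative_comp, pow_succ]

theorem iterate_derivative_comp_C_sub_X_of_odd {p : R[X]} {c : R} {k : ℕ} (hk : Odd k)
    (hp : p.comp (C c - X) = p) : (derivative^[k] p).comp (C c - X) = -derivative^[k] p := by
  have h := iterate_derivative_comp_C_sub_X p c k
  rw [hp, hk.neg_one_pow] at h
  linear_combination h

theorem X_pow_mul_X_sub_C_pow_comp_C_sub_X (N : ℕ) (c : R) :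
    (X ^ N * (X - C c) ^ N).comp (C c - X) = X ^ N * (X - C c) ^ N := by
  simp only [mul_comp, pow_comp, X_comp, sub_comp, C_comp, ← mul_pow]
  ring

theorem taylor_X_pow_mul_X_sub_C_pow (N : ℕ) (c : R) :
    taylor c (X ^ N * (X - C c) ^ N) = (X + C c) ^ N * X ^ N := by
  simp only [taylor_mul, taylor_pow, taylor_X, map_sub, taylor_C, add_sub_cancel_right]

theorem eval_iterate_derivative_X_pow_mul_X_sub_C_pow (n r : ℕ) (c x : R) :
    (derivative^[r + 1] (X ^ (n + r) * (X - C c) ^ (n + r))).eval x =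
      ((r + 1).factorial : R) * ∑ j ∈ range (r + 2),
        ((n + r).choose j : R) * ((n + r).choose (r + 1 - j) : R) *
          x ^ (j + n - 1) * (x - c) ^ (n + r - j) := by
  rw [iterate_derivative_mul, eval_finsetSum, mul_sum]
  refine sum_congr rfl fun j hj => ?_
  have hj : j ≤ r + 1 := Nat.lt_succ_iff.mp (mem_range.mp hj)
  have hexp : n + r - (r + 1 - j) = j + n - 1 := by omega
  have hfact : ((r + 1).choose j : R) * j.factorial * (r + 1 - j).factorial =
      (r + 1).factorial := by
    rw [← Nat.cast_mul, ← Nat.cast_mul, Nat.choose_mul_factorial_mul_factorial hj]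
  simp only [iterate_derivative_X_pow_eq_C_mul, iterate_derivative_X_sub_pow, hexp, nsmul_eq_mul,
    eval_mul, eval_natCast, eval_C, eval_pow, eval_X, eval_sub,
    Nat.descFactorial_eq_factorial_mul_choose]
  push_cast
  linear_combination ((n + r).choose j * (n + r).choose (r + 1 - j) * x ^ (j + n - 1) *
    (x - c) ^ (n + r - j) : R) * hfact

end CommRing

end Polynomial

open Polynomial hiding bernoulli sum_bernoulli

noncomputable def bernoulliUmbra : ℚ[X] →ₗ[ℚ] ℚ :=
  lsum fun t => LinearMap.mulRight ℚ (bernoulli t)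

theorem bernoulliUmbra_eq_sum_range {p : ℚ[X]} {d : ℕ} (h : p.natDegree < d) :
    bernoulliUmbra p = ∑ t ∈ range d, p.coeff t * bernoulli t :=
  sum_over_range' p (fun t => zero_mul (bernoulli t)) d h

theorem bernoulliUmbra_C_mul (a : ℚ) (p : ℚ[X]) :
    bernoulliUmbra (C a * p) = a * bernoulliUmbra p := by
  rw [← smul_eq_C_mul, map_smul, smul_eq_mul]

theorem bernoulliUmbra_X_pow (t : ℕ) : bernoulliUmbra (X ^ t) = bernoulli t := by
  rw [bernoulliUmbra_eq_sum_range (d := t + 1) (by simp), sum_eq_single t] <;>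
    simp +contextual [coeff_X_pow]

theorem bernoulliUmbra_taylor_one (p : ℚ[X]) :
    bernoulliUmbra (taylor 1 p) = bernoulliUmbra p + p.coeff 1 := by
  induction p using Polynomial.induction_on' with
  | add p q hp hq => simp only [map_add, hp, hq, coeff_add]; ring
  | monomial t a =>
    have hdeg : ((X + C (1 : ℚ)) ^ t).natDegree < t + 1 := by
      rw [natDegree_pow_X_add_C]; omega
    rw [taylor_monomial, bernoulliUmbra_C_mul, ← C_mul_X_pow_eq_monomial, bernoulliUmbra_C_mul,
      bernoulliUmbra_X_pow, bernoulliUmbra_eq_sum_range hdeg, coeff_C_mul_X_pow, sum_range_succ]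
    simp only [coeff_X_add_C_pow, one_pow, one_mul, Nat.choose_self, Nat.cast_one]
    rw [sum_bernoulli]
    rcases eq_or_ne t 1 with rfl | ht
    · simp; ring
    · simp [ht, Ne.symm ht]

theorem bernoulliUmbra_sub_comp_neg_X (p : ℚ[X]) :
    bernoulliUmbra p - bernoulliUmbra (p.comp (-X)) = -p.coeff 1 := by
  induction p using Polynomial.induction_on' with
  | add p q hp hq => simp only [add_comp, map_add, coeff_add]; linear_combination hp + hq
  | monomial t a =>
    have hneg : (-X : ℚ[X]) ^ t = C ((-1) ^ t) * X ^ t := by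
      rw [neg_pow, C_pow, C_neg, C_1]
    rw [← C_mul_X_pow_eq_monomial, mul_comp, C_comp, X_pow_comp, hneg, ← mul_assoc, ← C_mul,
      bernoulliUmbra_C_mul, bernoulliUmbra_C_mul, bernoulliUmbra_X_pow, coeff_C_mul_X_pow]
    rcases eq_or_ne t 1 with rfl | ht1
    · simp; ring
    rcases t.even_or_odd with ht | ht
    · simp [ht.neg_one_pow, ht1.symm]
    · simp [bernoulli_eq_zero_of_odd ht (by obtain ⟨k, rfl⟩ := ht; omega), ht1.symm]

theorem sum_range_eval_derivative_eq_bernoulliUmbra_taylor_sub (p : ℚ[X]) (M : ℕ) :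
    ∑ k ∈ range M, (derivative p).eval (k : ℚ) =
      bernoulliUmbra (taylor (M : ℚ) p) - bernoulliUmbra p := by
  induction M with
  | zero => simp
  | succ M ih =>
    rw [sum_range_succ, ih, Nat.cast_succ, add_comm (M : ℚ) 1, ← taylor_taylor,
      bernoulliUmbra_taylor_one, taylor_coeff_one]
    ring

theorem sum_Icc_eval_derivative_of_comp_C_sub_X_eq_neg {q : ℚ[X]} {c : ℕ} (hc : 1 ≤ c)
    (hq : q.comp (C (c : ℚ) - X) = -q) :
    ∑ k ∈ Icc 1 (c - 1), (derivative q).eval (k : ℚ) =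
      2 * bernoulliUmbra (taylor (c : ℚ) q) := by
  have hreflect : q.comp (-X) = -taylor (c : ℚ) q := by
    conv_lhs => rw [← neg_neg q, ← hq]
    rw [neg_comp, comp_assoc, taylor_apply]
    congr 2
    simp only [sub_comp, C_comp, X_comp]
    ring
  have hodd := bernoulliUmbra_sub_comp_neg_X q
  rw [hreflect, map_neg] at hodd
  have hzero : (derivative q).eval 0 = q.coeff 1 := by
    rw [← coeff_zero_eq_eval_zero, coeff_derivative]; simp
  have htel := sum_range_eval_derivative_eq_bernoulliUmbra_taylor_sub q c
  have hIcc : Icc 1 (c - 1) = Ico 1 c := by ext; simp; omega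
  rw [range_eq_Ico, sum_eq_sum_Ico_succ_bot (by omega), Nat.cast_zero, hzero, ← hIcc] at htel
  linarith

theorem bernoulliUmbra_iterate_derivative_X_add_C_pow_mul_X_pow (n r : ℕ) (c : ℚ) :
    bernoulliUmbra (derivative^[r] ((X + C c) ^ (n + r) * X ^ (n + r))) =
      r.factorial * ∑ k ∈ range (n + r + 1),
        c ^ (n + r - k) * ((n + r).choose k : ℚ) * ((n + k + r).choose r : ℚ) *
          bernoulli (n + k) := by
  have hexpand : (X + C c) ^ (n + r) * X ^ (n + r) =
      ∑ k ∈ range (n + r + 1), C (c ^ (n + r - k) * (n + r).choose k) * X ^ (n + k + r) := by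
    rw [add_pow, sum_mul]
    refine sum_congr rfl fun k _ => ?_
    rw [map_mul, map_pow, ← C_eq_natCast]
    ring
  rw [hexpand, iterate_derivative_sum, map_sum, mul_sum]
  refine sum_congr rfl fun k _ => ?_
  rw [iterate_derivative_C_mul, iterate_derivative_X_pow_eq_C_mul, ← mul_assoc, ← C_mul,
    bernoulliUmbra_C_mul, bernoulliUmbra_X_pow, Nat.add_sub_cancel,
    Nat.descFactorial_eq_factorial_mul_choose]
  push_cast
  ring

/-- Gessel's explicit formula for `S_{n,n,r}^{(1)}(m,0,0)` with `r` odd: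
`∑_{k=0}^{n+r} m^{n+r-k} C(n+r,k) C(n+k+r,r) B_{n+k}
 = (1/2)(r+1) ∑_{k=1}^{m-1} ∑_{j=0}^{r+1} C(n+r,j) C(n+r,r+1-j) k^{j+n-1} (k-m)^{n+r-j}`.
Terms whose binomial coefficient `C(n+r,r+1-j)` vanishes are zero; this covers the only
case `n = j = 0` where the exponent `j+n-1` would be negative (here truncated natural
subtraction is used, which is harmless since the corresponding term vanishes). -/
theorem gessel_symmetric_identity (m : ℕ) (hm : 1 ≤ m) (n r : ℕ) (hr : Odd r) :
    ∑ k ∈ Finset.range (n + r + 1),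
        (m : ℚ) ^ (n + r - k) * ((n + r).choose k : ℚ) * ((n + k + r).choose r : ℚ) *
          bernoulli (n + k) =
    (1 / 2 : ℚ) * ((r : ℚ) + 1) *
      ∑ k ∈ Finset.Icc 1 (m - 1), ∑ j ∈ Finset.range (r + 2),
        ((n + r).choose j : ℚ) * ((n + r).choose (r + 1 - j) : ℚ) *
          (k : ℚ) ^ (j + n - 1) * ((k : ℚ) - (m : ℚ)) ^ (n + r - j) := by
  have h := sum_Icc_eval_derivative_of_comp_C_sub_X_eq_neg hm
    (iterate_derivative_comp_C_sub_X_of_odd hr (X_pow_mul_X_sub_C_pow_comp_C_sub_X (n + r) _))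
  rw [← iterate_derivative_taylor, taylor_X_pow_mul_X_sub_C_pow,
    bernoulliUmbra_iterate_derivative_X_add_C_pow_mul_X_pow] at h
  simp only [← Function.iterate_succ_apply' derivative,
    eval_iterate_derivative_X_pow_mul_X_sub_C_pow, ← mul_sum, Nat.factorial_succ] at h
  have hfact : (r.factorial : ℚ) ≠ 0 := by positivity
  apply mul_left_cancel₀ hfact
  push_cast at h
  linear_combination (-1 / 2 : ℚ) * h
end

section
/- Let α, x, y ∈ ℂ and let ℓ, n, r be natural numbers. Then Σ_{k=0}^{n+r} C(n+r,k) C(ℓ+k+r,r) x^{n+r−k} B_{ℓ+k}^{(α)}(y) = Σ_{k=0}^{ℓ+r} C(ℓ+r,k) C(n+k+r,r) (−x)^{ℓ+r−k} B_{n+k}^{(α)}(x+y). -/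
open scoped BigOperators
open Polynomial Finset

noncomputable section

/-- The formal power series `(e^t - 1)/t` over `ℂ` (constant term `1`). -/
def expSub1DivT : PowerSeries ℂ := PowerSeries.mk fun n => ((n + 1).factorial : ℂ)⁻¹

/-- The formal power series `t/(e^t - 1)` over `ℂ`. -/
def bernoulliBase : PowerSeries ℂ := expSub1DivT⁻¹

/-- The formal logarithm of a power series with constant term `1`:
`log F = ∑_{k ≥ 1} (-1)^(k+1) (F-1)^k / k`, computed coefficientwise
(only the terms with `k ≤ n` contribute to the `n`-th coefficient). -/
def formalLog (F : PowerSeries ℂ) : PowerSeries ℂ :=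
  PowerSeries.mk fun n =>
    ∑ k ∈ Finset.range (n + 1),
      (-1 : ℂ) ^ (k + 1) * (k : ℂ)⁻¹ * PowerSeries.coeff n ((F - 1) ^ k)

/-- The formal exponential of a power series with zero constant term:
`exp H = ∑_{k ≥ 0} H^k / k!`, computed coefficientwise. -/
def formalExp (H : PowerSeries ℂ) : PowerSeries ℂ :=
  PowerSeries.mk fun n =>
    ∑ k ∈ Finset.range (n + 1), ((k.factorial : ℂ))⁻¹ * PowerSeries.coeff n (H ^ k)

/-- `(t/(e^t - 1))^α := exp (α • log (t/(e^t - 1)))`. -/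
def bernoulliBasePow (α : ℂ) : PowerSeries ℂ := formalExp (α • formalLog bernoulliBase)

/-- The generalized Bernoulli numbers `B_n^{(α)}`, defined by
`∑ B_n^{(α)} t^n / n! = (t/(e^t-1))^α`. -/
def genBernoulliNumber (α : ℂ) (n : ℕ) : ℂ :=
  (n.factorial : ℂ) * PowerSeries.coeff n (bernoulliBasePow α)

/-- The generalized Bernoulli polynomials `B_n^{(α)}(x)`, defined by
`∑ B_n^{(α)}(x) t^n / n! = (t/(e^t-1))^α e^{t x}`; equivalently
`B_n^{(α)}(x) = ∑_{k ≤ n} C(n,k) B_k^{(α)} x^{n-k}`. -/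
def genBernoulliPoly (α : ℂ) (n : ℕ) : Polynomial ℂ :=
  ∑ k ∈ Finset.range (n + 1),
    Polynomial.C ((n.choose k : ℂ) * genBernoulliNumber α k) * Polynomial.X ^ (n - k)

/-- `Ω_γ`: the unique `ℂ`-linear endomorphism of `ℂ[X]` with `Ω_γ (X^n) = B_n^{(γ)}(X)`. -/
def OmegaOp (γ : ℂ) (P : Polynomial ℂ) : Polynomial ℂ :=
  P.sum fun n a => Polynomial.C a * genBernoulliPoly γ n

end

/-! The generalized Bernoulli polynomials form the Appell sequence `B_m^{(α)}(X) = b(D) X^m`, where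
`b(D) = ∑ₖ B_k^{(α)} D^{(k)}` is built from Hasse derivatives; `b(D)` commutes with the translation
`X ↦ X + x`, so `B_m^{(α)}(x + y)` is `b(D) (X + x)^m` evaluated at `y`. Both sides of the identity are
therefore `b(D)` applied to the single polynomial `D^{(r)} (X^(ℓ+r) (X + x)^(n+r))`, then evaluated at `y`:
expanding `(X + x)^(n+r)` gives the left side, expanding `X^(ℓ+r) = ((X + x) - x)^(ℓ+r)` the right side. -/

namespace Polynomial

section Semiring

variable {R : Type*} [Semiring R]

theorem hasseDeriv_taylor (k : ℕ) (a : R) (f : R[X]) :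
    hasseDeriv k (taylor a f) = taylor a (hasseDeriv k f) := by
  ext n
  rw [hasseDeriv_coeff, taylor_coeff, taylor_coeff, ← LinearMap.comp_apply, hasseDeriv_comp,
    LinearMap.smul_apply, eval_smul, nsmul_eq_mul, Nat.choose_symm_add]

theorem hasseDeriv_X_pow_add (k m : ℕ) :
    hasseDeriv k (X ^ (m + k) : R[X]) = ((m + k).choose k : R) • X ^ m := by
  rw [← monomial_one_right_eq_X_pow, hasseDeriv_monomial, Nat.add_sub_cancel, mul_one,
    smul_X_eq_monomial]

end Semiring

section CommSemiring

variable {R : Type*} [CommSemiring R]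

theorem hasseDeriv_X_pow_mul_X_add_C_pow (c : R) (ℓ n r : ℕ) :
    hasseDeriv r (X ^ (ℓ + r) * (X + C c) ^ (n + r)) =
      ∑ k ∈ range (n + r + 1),
        (((n + r).choose k : R) * ((ℓ + k + r).choose r : R) * c ^ (n + r - k)) • X ^ (ℓ + k) := by
  rw [add_pow, mul_sum, map_sum]
  refine sum_congr rfl fun k _ => ?_
  have hterm : X ^ (ℓ + r) * (X ^ k * C c ^ (n + r - k) * ((n + r).choose k : R[X])) =
      (((n + r).choose k : R) * c ^ (n + r - k)) • X ^ (ℓ + k + r) := by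
    rw [smul_eq_C_mul, C_mul, C_pow, ← map_natCast C]
    ring
  rw [hterm, map_smul, hasseDeriv_X_pow_add, smul_smul]
  congr 1
  ring

theorem hasseDeriv_X_add_C_pow_mul_X_add_C_add_C_pow (a c : R) (ℓ n r : ℕ) :
    hasseDeriv r ((X + C a) ^ (ℓ + r) * (X + C a + C c) ^ (n + r)) =
      ∑ k ∈ range (n + r + 1),
        (((n + r).choose k : R) * ((ℓ + k + r).choose r : R) * c ^ (n + r - k)) •
          (X + C a) ^ (ℓ + k) := by
  have htaylor : (X + C a) ^ (ℓ + r) * (X + C a + C c) ^ (n + r) =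
      taylor a (X ^ (ℓ + r) * (X + C c) ^ (n + r)) := by
    rw [taylor_mul, taylor_pow, taylor_pow, map_add, taylor_X, taylor_C]
  simp only [htaylor, hasseDeriv_taylor, hasseDeriv_X_pow_mul_X_add_C_pow, map_sum, map_smul,
    taylor_X_pow]

variable (b : ℕ → R) (N : ℕ)

-- Truncating `∑ₖ b k • hasseDeriv k` at `N` loses nothing on polynomials of degree `< N`.
noncomputable def hasseDerivSum : R[X] →ₗ[R] R[X] :=
  ∑ k ∈ range N, b k • hasseDeriv k

theorem hasseDerivSum_taylor (a : R) (f : R[X]) :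
    hasseDerivSum b N (taylor a f) = taylor a (hasseDerivSum b N f) := by
  simp only [hasseDerivSum, LinearMap.sum_apply, LinearMap.smul_apply,
    hasseDeriv_taylor, map_sum, map_smul]

theorem hasseDerivSum_X_pow {m : ℕ} (hm : m < N) :
    hasseDerivSum b N (X ^ m) =
      ∑ i ∈ range (m + 1), C ((m.choose i : R) * b i) * X ^ (m - i) := by
  simp only [hasseDerivSum, LinearMap.sum_apply, LinearMap.smul_apply]
  rw [← sum_subset (range_subset_range.2 hm) fun k _ hk => ?_]
  · refine sum_congr rfl fun i _ => ?_
    rw [← monomial_one_right_eq_X_pow, hasseDeriv_monomial, smul_monomial, mul_one,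
      ← C_mul_X_pow_eq_monomial, smul_eq_mul, mul_comm (b i)]
  · rw [hasseDeriv_eq_zero_of_lt_natDegree _ _ ((natDegree_X_pow_le m).trans_lt ?_), smul_zero]
    simpa using hk

end CommSemiring

section CommRing

variable {R : Type*} [CommRing R]

theorem sum_choose_smul_X_pow_eq_sum_choose_smul_X_add_C_pow (x : R) (ℓ n r : ℕ) :
    ∑ k ∈ range (n + r + 1),
        (((n + r).choose k : R) * ((ℓ + k + r).choose r : R) * x ^ (n + r - k)) • X ^ (ℓ + k) =
      ∑ k ∈ range (ℓ + r + 1),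
        (((ℓ + r).choose k : R) * ((n + k + r).choose r : R) * (-x) ^ (ℓ + r - k)) •
          (X + C x) ^ (n + k) := by
  rw [← hasseDeriv_X_pow_mul_X_add_C_pow, ← hasseDeriv_X_add_C_pow_mul_X_add_C_add_C_pow, C_neg,
    add_neg_cancel_right, mul_comm]

theorem sum_choose_mul_eval_eq_of_commute_taylor (T : R[X] →ₗ[R] R[X]) (x y : R)
    (hT : ∀ f, T (taylor x f) = taylor x (T f)) (ℓ n r : ℕ) :
    ∑ k ∈ range (n + r + 1),
        ((n + r).choose k : R) * ((ℓ + k + r).choose r : R) * x ^ (n + r - k) *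
          (T (X ^ (ℓ + k))).eval y =
      ∑ k ∈ range (ℓ + r + 1),
        ((ℓ + r).choose k : R) * ((n + k + r).choose r : R) * (-x) ^ (ℓ + r - k) *
          (T (X ^ (n + k))).eval (x + y) := by
  have h := congrArg (fun f => (T f).eval y)
    (sum_choose_smul_X_pow_eq_sum_choose_smul_X_add_C_pow x ℓ n r)
  simpa only [map_sum, map_smul, eval_finsetSum, eval_smul, smul_eq_mul, ← taylor_X_pow, hT,
    taylor_eval, add_comm y x] using h

end CommRing

end Polynomial

/-- For `α, x, y ∈ ℂ` and `ℓ, n, r ∈ ℕ`: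
`∑_{k=0}^{n+r} C(n+r,k) C(ℓ+k+r,r) x^{n+r-k} B_{ℓ+k}^{(α)}(y)
 = ∑_{k=0}^{ℓ+r} C(ℓ+r,k) C(n+k+r,r) (-x)^{ℓ+r-k} B_{n+k}^{(α)}(x+y)`. -/
theorem reflection_identity (α x y : ℂ) (ℓ n r : ℕ) :
    ∑ k ∈ Finset.range (n + r + 1),
        ((n + r).choose k : ℂ) * ((ℓ + k + r).choose r : ℂ) * x ^ (n + r - k) *
          (genBernoulliPoly α (ℓ + k)).eval y =
    ∑ k ∈ Finset.range (ℓ + r + 1),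
        ((ℓ + r).choose k : ℂ) * ((n + k + r).choose r : ℂ) * (-x) ^ (ℓ + r - k) *
          (genBernoulliPoly α (n + k)).eval (x + y) := by
  set T := hasseDerivSum (genBernoulliNumber α) (n + ℓ + r + 1)
  have hB : ∀ m ≤ n + ℓ + r, genBernoulliPoly α m = T (X ^ m) := fun m hm =>
    (hasseDerivSum_X_pow _ _ (Nat.lt_succ_of_le hm)).symm
  refine (sum_congr rfl fun k hk => ?_).trans
    ((sum_choose_mul_eval_eq_of_commute_taylor T x y (hasseDerivSum_taylor _ _ x) ℓ n r).trans
      (sum_congr rfl fun k hk => ?_)) <;>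
  · rw [mem_range] at hk
    rw [hB _ (by omega)]
end

section
/- Let α, x, y, z ∈ ℂ with x + y + z = α, let ℓ, n be natural numbers and let r ≥ 1 be a natural number. Then (−1)^n Σ_{k=0}^{n+r−1} C(n+r,k) C(ℓ+k+r,r) x^{n+r−k} B_{ℓ+k}^{(α)}(y) + (−1)^{ℓ+r+1} Σ_{k=0}^{ℓ+r−1} C(ℓ+r,k) C(n+k+r,r) x^{ℓ+r−k} B_{n+k}^{(α)}(z) = (−1)^n C(ℓ+n+2r,r) ( B_{n+ℓ+r}^{(α)}(x+y) − B_{n+ℓ+r}^{(α)}(y) ). -/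
open scoped BigOperators
open Polynomial Finset

/-!
Write `P_α = (t/(e^t-1))^α`, so that `B_m^{(α)}(w) = m! [t^m] P_α(t) e^{wt}`. Since
`-t/(e^{-t}-1) = e^t · t/(e^t-1)` and the formal `log` and `exp` turn products into sums and
back, `P_α(-t) = e^{αt} P_α(t)`. This gives the symmetry `B_m^{(α)}(α - w) = (-1)^m B_m^{(α)}(w)`,
which together with the Appell property expresses each `B_{n+k}^{(α)}(z)`, `z = α - (x+y)`,
through the values `b_j = B_j^{(α)}(y)`. The top terms `k = n+r` and `k = ℓ+r` missing from the
two sums are exactly the two terms of the right-hand side; once they are added back, the identity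
is a linear relation among the `b_j`. Comparing the coefficients of `x^{n+ℓ+r-j} b_j` leaves
`∑_k (-1)^{ℓ+r+k} C(ℓ+r,k) C(n+k+r,r) C(n+k,j) = C(n+r,j-ℓ) C(j+r,r)`, an `(ℓ+r)`-th forward
difference of `k ↦ C(n+r+k, j+r)` after `C(a+r,r) C(a,j) = C(j+r,r) C(a+r,j+r)`.
-/

open PowerSeries

section Substitution

variable {R : Type*} [CommRing R]

theorem PowerSeries.coeff_subst_eq_sum_range {H : R⟦X⟧} (hH : constantCoeff H = 0)
    (f : R⟦X⟧) (n : ℕ) :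
    coeff n (f.subst H) = ∑ k ∈ Finset.range (n + 1), coeff k f * coeff n (H ^ k) := by
  rw [coeff_subst' (HasSubst.of_constantCoeff_zero' hH)]
  refine finsum_eq_sum_of_support_subset _ fun k hk => ?_
  by_contra hkn
  rw [Finset.coe_range, Set.mem_Iio, not_lt] at hkn
  exact hk (by dsimp only; rw [coeff_of_lt_order _ ((Nat.cast_lt.2 hkn).trans_le
    (le_order_pow_of_constantCoeff_eq_zero k hH)), smul_zero])

theorem PowerSeries.rescale_subst {H : R⟦X⟧} (hH : HasSubst H) (a : R) (f : R⟦X⟧) :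
    rescale a (f.subst H) = f.subst (rescale a H) := by
  rw [rescale_eq_subst, subst_comp_subst_apply hH (HasSubst.smul_X' a), ← rescale_eq_subst]

theorem PowerSeries.eq_of_derivative_eq_mul [IsAddTorsionFree R] {D F G : R⟦X⟧}
    (hF : d⁄dX R F = D * F) (hG : d⁄dX R G = D * G)
    (h0 : constantCoeff F = constantCoeff G) : F = G := by
  rw [← sub_eq_zero]
  set W := F - G
  have hW : d⁄dX R W = D * W := by rw [map_sub, hF, hG, mul_sub]
  suffices ∀ n, ∀ m ≤ n, coeff m W = 0 from ext fun n => this n n le_rfl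
  intro n
  induction n with
  | zero => simp [W, h0]
  | succ n ih =>
    intro m hm
    rcases Nat.of_le_succ hm with hm | rfl
    · exact ih m hm
    have h := congrArg (coeff n) hW
    rw [coeff_derivative, coeff_mul, Finset.sum_eq_zero fun p hp => by
      rw [ih p.2 (Finset.HasAntidiagonal.antidiagonal.snd_le hp), mul_zero]] at h
    rw [← Nat.cast_succ, mul_comm, ← nsmul_eq_mul] at h
    exact (smul_eq_zero.1 h).resolve_left n.succ_ne_zero

end Substitution

section ExpLog

variable {K : Type*} [Field K] [CharZero K]

theorem PowerSeries.constantCoeff_exp_subst {H : K⟦X⟧} (hH : constantCoeff H = 0) :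
    constantCoeff ((exp K).subst H) = 1 := by
  rw [← coeff_zero_eq_constantCoeff_apply, coeff_subst_eq_sum_range hH]
  simp

theorem PowerSeries.derivative_exp_subst {H : K⟦X⟧} (hH : constantCoeff H = 0) :
    d⁄dX K ((exp K).subst H) = d⁄dX K H * (exp K).subst H := by
  rw [derivative_subst (HasSubst.of_constantCoeff_zero' hH), derivative_exp, mul_comm]

theorem PowerSeries.exp_subst_add {G H : K⟦X⟧} (hG : constantCoeff G = 0)
    (hH : constantCoeff H = 0) :
    (exp K).subst (G + H) = (exp K).subst G * (exp K).subst H := by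
  have hGH : constantCoeff (G + H) = 0 := by rw [map_add, hG, hH, add_zero]
  refine eq_of_derivative_eq_mul (D := d⁄dX K (G + H)) (derivative_exp_subst hGH) ?_ ?_
  · rw [Derivation.leibniz, derivative_exp_subst hG, derivative_exp_subst hH, map_add,
      smul_eq_mul, smul_eq_mul]
    ring
  · rw [map_mul, constantCoeff_exp_subst hG, constantCoeff_exp_subst hH,
      constantCoeff_exp_subst hGH, mul_one]

theorem PowerSeries.exp_subst_smul_X (a : K) :
    (exp K).subst (a • X : K⟦X⟧) = rescale a (exp K) :=
  (rescale_eq_subst a _).symm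

theorem PowerSeries.derivative_logOf_mul {f : K⟦X⟧} (hf : constantCoeff f = 1) :
    d⁄dX K (logOf f) * f = d⁄dX K f := by
  have hf1 : HasSubst (f - 1) :=
    HasSubst.of_constantCoeff_zero' (by rw [map_sub, hf, map_one, sub_self])
  have hgeom : d⁄dX K (log K) * (1 + X) = 1 := by
    ext (_ | n) <;> simp [deriv_log, mul_add, coeff_succ_mul_X, pow_succ]
  have hinv := congrArg (substAlgHom (R := K) hf1) hgeom
  rw [map_mul, map_add, map_one, substAlgHom_X, add_sub_cancel, coe_substAlgHom] at hinv
  rw [logOf_eq, derivative_subst hf1, map_sub, derivative_one, sub_zero, mul_right_comm, hinv,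
    one_mul]

theorem PowerSeries.logOf_mul {f g : K⟦X⟧} (hf : constantCoeff f = 1)
    (hg : constantCoeff g = 1) : logOf (f * g) = logOf f + logOf g := by
  have hfg : constantCoeff (f * g) = 1 := by rw [map_mul, hf, hg, one_mul]
  refine derivative.ext (mul_right_cancel₀ (b := f * g) (fun h0 => by simp [h0] at hfg) ?_) ?_
  · rw [derivative_logOf_mul hfg, map_add, Derivation.leibniz, smul_eq_mul, smul_eq_mul,
      ← derivative_logOf_mul hf, ← derivative_logOf_mul hg]
    ring
  · rw [map_add, constantCoeff_logOf hfg, constantCoeff_logOf hf, constantCoeff_logOf hg,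
      add_zero]

theorem PowerSeries.logOf_exp : logOf (exp K) = X := by
  refine derivative.ext (mul_right_cancel₀ (b := exp K) (fun h0 => by
    simpa [h0] using constantCoeff_exp (A := K)) ?_) ?_
  · rw [derivative_logOf_mul (constantCoeff_exp (A := K)), derivative_exp, derivative_X, one_mul]
  · rw [constantCoeff_logOf (constantCoeff_exp (A := K)), constantCoeff_X]

end ExpLog

theorem formalExp_eq_subst {H : PowerSeries ℂ} (hH : constantCoeff H = 0) :
    formalExp H = (exp ℂ).subst H := by
  ext n
  rw [formalExp, coeff_mk, coeff_subst_eq_sum_range hH]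
  simp

theorem formalLog_eq_logOf {F : PowerSeries ℂ} (hF : constantCoeff F = 1) :
    formalLog F = logOf F := by
  ext n
  rw [formalLog, coeff_mk, logOf_eq,
    coeff_subst_eq_sum_range (by rw [map_sub, hF, map_one, sub_self])]
  refine Finset.sum_congr rfl fun k _ => ?_
  rcases k with _ | k <;> simp [coeff_log, div_eq_mul_inv]

theorem constantCoeff_expSub1DivT : constantCoeff expSub1DivT = 1 := by
  simp [expSub1DivT, ← coeff_zero_eq_constantCoeff_apply]

theorem expSub1DivT_mul_bernoulliBase : expSub1DivT * bernoulliBase = 1 :=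
  PowerSeries.mul_inv_cancel _ (by rw [constantCoeff_expSub1DivT]; exact one_ne_zero)

theorem constantCoeff_bernoulliBase : constantCoeff bernoulliBase = 1 := by
  simpa [constantCoeff_expSub1DivT] using
    congrArg PowerSeries.constantCoeff expSub1DivT_mul_bernoulliBase

theorem X_mul_expSub1DivT : (X : ℂ⟦X⟧) * expSub1DivT = exp ℂ - 1 := by
  ext (_ | n)
  · simp
  · rw [mul_comm, coeff_succ_mul_X, expSub1DivT, coeff_mk, map_sub, coeff_exp,
      PowerSeries.coeff_one]
    simp

theorem rescale_neg_one_bernoulliBase :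
    rescale (-1) bernoulliBase = exp ℂ * bernoulliBase := by
  set S := expSub1DivT
  have hX : (X : ℂ⟦X⟧) ≠ 0 := X_ne_zero
  have hS : exp ℂ * rescale (-1) S = S := by
    have h1 := congrArg (rescale (-1 : ℂ)) X_mul_expSub1DivT
    rw [map_mul, rescale_X, map_sub, map_one, map_neg, map_one, neg_one_mul] at h1
    have hE : exp ℂ * rescale (-1) (exp ℂ) = 1 := exp_mul_exp_neg_eq_one
    refine mul_left_cancel₀ hX ?_
    linear_combination (-exp ℂ) * h1 - hE - X_mul_expSub1DivT
  have hSb := expSub1DivT_mul_bernoulliBase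
  have h2 := congrArg (rescale (-1 : ℂ)) hSb
  rw [map_mul, map_one] at h2
  refine mul_right_cancel₀ (b := rescale (-1) S)
    (fun h0 => by rw [h0, zero_mul] at h2; exact zero_ne_one h2) ?_
  linear_combination h2 - bernoulliBase * hS - hSb

theorem rescale_neg_one_bernoulliBasePow (α : ℂ) :
    rescale (-1) (bernoulliBasePow α) = rescale α (exp ℂ) * bernoulliBasePow α := by
  have hb := constantCoeff_bernoulliBase
  have hL : constantCoeff (logOf bernoulliBase) = 0 := constantCoeff_logOf hb
  have hlog : rescale (-1) (logOf bernoulliBase) = (X : ℂ⟦X⟧) + logOf bernoulliBase := by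
    rw [logOf_eq, rescale_subst (HasSubst.of_constantCoeff_zero' (by simp [hb])), map_sub,
      map_one, rescale_neg_one_bernoulliBase, ← logOf_eq, logOf_mul (constantCoeff_exp) hb,
      logOf_exp, logOf_eq]
  have hsmul :
      rescale (-1 : ℂ) (α • logOf bernoulliBase) = α • rescale (-1) (logOf bernoulliBase) := by
    rw [← coe_rescaleAlgHom]; exact map_smul (rescaleAlgHom (-1 : ℂ)) α _
  have hαX : constantCoeff (α • (X : ℂ⟦X⟧)) = 0 := by simp
  have hαL : constantCoeff (α • logOf bernoulliBase) = 0 := by simp [hL]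
  rw [bernoulliBasePow, formalLog_eq_logOf hb, formalExp_eq_subst hαL,
    rescale_subst (HasSubst.of_constantCoeff_zero' hαL), hsmul, hlog, smul_add,
    exp_subst_add hαX hαL, exp_subst_smul_X]

theorem fwdDiff_iter_choose_eq_ite (m s : ℕ) :
    (fwdDiff 1)^[m] (fun x ↦ x.choose s : ℕ → ℤ) =
      fun x ↦ if m ≤ s then x.choose (s - m) else 0 := by
  by_cases hms : m ≤ s
  · obtain ⟨t, rfl⟩ := Nat.exists_eq_add_of_le hms
    simp [fwdDiff_iter_choose]
  · obtain ⟨t, rfl⟩ : ∃ t, m = t + 1 + s := ⟨m - s - 1, by omega⟩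
    have h0 := fwdDiff_iter_choose 0 s
    rw [add_zero] at h0
    simp only [hms, if_false]
    rw [Function.iterate_add_apply, h0]
    simpa [Function.iterate_succ_apply] using
      Function.iterate_fixed (fwdDiff_const 1 (0 : ℤ)) t

theorem sum_neg_one_pow_mul_choose_mul_choose_add (m a s : ℕ) :
    ∑ k ∈ range (m + 1), (-1 : ℤ) ^ (m + k) * m.choose k * (a + k).choose s =
      if m ≤ s then (a.choose (s - m) : ℤ) else 0 := by
  have h := fwdDiff_iter_eq_sum_shift 1 (fun x ↦ x.choose s : ℕ → ℤ) m a
  rw [fwdDiff_iter_choose_eq_ite] at h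
  beta_reduce at h
  rw [h]
  refine sum_congr rfl fun k hk => ?_
  have hk := mem_range.1 hk
  rw [show m + k = m - k + 2 * k by omega, pow_add, pow_mul, neg_one_sq, one_pow, mul_one]
  simp [mul_assoc]

theorem Nat.add_choose_mul_choose (a r j : ℕ) :
    (a + r).choose r * a.choose j = (j + r).choose r * (a + r).choose (j + r) := by
  rcases le_or_gt j a with hj | hj
  · have h1 := Nat.choose_mul (n := a + r) hj
    have h2 := Nat.choose_mul (n := a + r) (Nat.le_add_right j r)
    rw [Nat.choose_symm_of_eq_add (show a + r - j = a - j + r by omega)] at h1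
    rw [Nat.add_sub_cancel_left] at h2
    rw [← Nat.choose_symm_add, h1, ← Nat.choose_symm_add, mul_comm _ ((a + r).choose _), h2]
  · rw [Nat.choose_eq_zero_of_lt hj, Nat.choose_eq_zero_of_lt (by omega : a + r < j + r)]
    simp

theorem sum_neg_one_pow_mul_choose_mul_add_choose_mul_choose (ℓ n r j : ℕ) :
    ∑ k ∈ range (ℓ + r + 1),
        (-1 : ℤ) ^ (ℓ + r + k) * (ℓ + r).choose k * (n + k + r).choose r * (n + k).choose j =
      if ℓ ≤ j then ((n + r).choose (j - ℓ) * (j + r).choose r : ℤ) else 0 := by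
  have h : ∀ k, ((n + k + r).choose r * (n + k).choose j : ℤ) =
      (j + r).choose r * (n + r + k).choose (j + r) := fun k => by
    rw [show n + r + k = n + k + r by omega]
    exact_mod_cast Nat.add_choose_mul_choose (n + k) r j
  simp_rw [mul_assoc, h, mul_left_comm _ ((j + r).choose r : ℤ), ← mul_sum, ← mul_assoc,
    sum_neg_one_pow_mul_choose_mul_choose_add]
  by_cases hj : ℓ ≤ j
  · rw [if_pos (by omega), if_pos hj, show j + r - (ℓ + r) = j - ℓ by omega, mul_comm]
  · rw [if_neg (by omega), if_neg hj, mul_zero]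

section Appell

variable {R : Type*} [CommRing R]

/-- The umbral power `(x + b)^m`. -/
def appellShift (b : ℕ → R) (x : R) (m : ℕ) : R :=
  ∑ j ∈ range (m + 1), (m.choose j : R) * x ^ (m - j) * b j

theorem sum_mul_shift_eq_sum_ite (f b : ℕ → R) (x : R) (ℓ M : ℕ) :
    ∑ k ∈ range (M + 1), f k * x ^ (M - k) * b (ℓ + k) =
      ∑ j ∈ range (ℓ + M + 1), (if ℓ ≤ j then f (j - ℓ) else 0) * x ^ (ℓ + M - j) * b j := by
  rw [add_assoc, sum_range_add _ ℓ, sum_eq_zero (s := range ℓ) fun j hj => by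
    rw [if_neg (not_le.2 (mem_range.1 hj)), zero_mul, zero_mul], zero_add]
  refine (sum_congr rfl fun k _ => ?_).symm
  rw [if_pos (Nat.le_add_right ℓ k), Nat.add_sub_cancel_left, Nat.add_sub_add_left]

theorem sum_mul_appellShift_add (a b : ℕ → R) (x : R) (n M : ℕ) :
    ∑ k ∈ range (M + 1), a k * x ^ (M - k) * appellShift b x (n + k) =
      ∑ j ∈ range (n + M + 1),
        (∑ k ∈ range (M + 1), a k * (n + k).choose j) * x ^ (n + M - j) * b j := by
  simp_rw [appellShift, mul_sum, sum_mul]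
  rw [sum_comm (s := range (n + M + 1))]
  refine sum_congr rfl fun k hk => ?_
  have hk := mem_range.1 hk
  rw [← sum_subset (range_subset_range.2 (by omega : n + k + 1 ≤ n + M + 1)) fun j _ hj => by
    rw [Nat.choose_eq_zero_of_lt (by simpa using hj)]; simp]
  refine sum_congr rfl fun j hj => ?_
  have hj := mem_range.1 hj
  rw [show n + M - j = M - k + (n + k - j) by omega, pow_add]
  ring

theorem sum_choose_mul_choose_mul_shift_eq_sum_mul_appellShift (b : ℕ → R) (x : R)
    (ℓ n r : ℕ) :
    ∑ k ∈ range (n + r + 1),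
        ((n + r).choose k * (ℓ + k + r).choose r : R) * x ^ (n + r - k) * b (ℓ + k) =
      ∑ k ∈ range (ℓ + r + 1),
        ((-1) ^ (ℓ + r + k) * (ℓ + r).choose k * (n + k + r).choose r : R) * x ^ (ℓ + r - k) *
          appellShift b x (n + k) := by
  rw [sum_mul_shift_eq_sum_ite, sum_mul_appellShift_add, show ℓ + (n + r) = n + (ℓ + r) by ring]
  refine sum_congr rfl fun j _ => ?_
  have h := congrArg (Int.cast : ℤ → R)
    (sum_neg_one_pow_mul_choose_mul_add_choose_mul_choose ℓ n r j)
  push_cast at h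
  rw [h]
  split_ifs with hj
  · rw [show ℓ + (j - ℓ) = j by omega]
  · rfl

end Appell

open Nat in
theorem genBernoulliPoly_eval_eq_coeff (α w : ℂ) (m : ℕ) :
    (genBernoulliPoly α m).eval w = m ! * coeff m (bernoulliBasePow α * rescale w (exp ℂ)) := by
  rw [genBernoulliPoly, eval_finsetSum, PowerSeries.coeff_mul,
    Nat.sum_antidiagonal_eq_sum_range_succ_mk, mul_sum]
  refine sum_congr rfl fun k hk => ?_
  rw [eval_mul, eval_C, eval_pow, eval_X, coeff_rescale, coeff_exp, genBernoulliNumber,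
    Nat.cast_choose ℂ (Nat.lt_succ_iff.1 (mem_range.1 hk))]
  have := Nat.cast_ne_zero (R := ℂ) |>.2 k.factorial_ne_zero
  simp only [one_div, map_inv₀, map_natCast]
  field_simp

theorem genBernoulliPoly_eval_add (α u v : ℂ) (m : ℕ) :
    (genBernoulliPoly α m).eval (u + v) =
      appellShift (fun j => (genBernoulliPoly α j).eval v) u m := by
  rw [genBernoulliPoly_eval_eq_coeff, add_comm, ← exp_mul_exp_eq_exp_add, ← mul_assoc,
    PowerSeries.coeff_mul, Nat.sum_antidiagonal_eq_sum_range_succ_mk, appellShift, mul_sum]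
  refine sum_congr rfl fun k hk => ?_
  rw [genBernoulliPoly_eval_eq_coeff, coeff_rescale, coeff_exp,
    Nat.cast_choose ℂ (Nat.lt_succ_iff.1 (mem_range.1 hk))]
  have := Nat.cast_ne_zero (R := ℂ) |>.2 k.factorial_ne_zero
  simp only [one_div, map_inv₀, map_natCast]
  field_simp

theorem genBernoulliPoly_eval_sub (α w : ℂ) (m : ℕ) :
    (genBernoulliPoly α m).eval (α - w) = (-1) ^ m * (genBernoulliPoly α m).eval w := by
  have h : rescale (-1) (bernoulliBasePow α * rescale w (exp ℂ)) =
      bernoulliBasePow α * rescale (α - w) (exp ℂ) := by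
    rw [map_mul, rescale_neg_one_bernoulliBasePow, rescale_rescale, mul_right_comm,
      exp_mul_exp_eq_exp_add, mul_comm, show α + w * -1 = α - w by ring]
  rw [genBernoulliPoly_eval_eq_coeff, genBernoulliPoly_eval_eq_coeff, ← h, coeff_rescale]
  ring

theorem truncated_symmetry_identity_general (α x y z : ℂ) (h : x + y + z = α) (ℓ n r : ℕ) :
    (-1 : ℂ) ^ n *
        ∑ k ∈ Finset.range (n + r),
          ((n + r).choose k : ℂ) * ((ℓ + k + r).choose r : ℂ) * x ^ (n + r - k) *
            (genBernoulliPoly α (ℓ + k)).eval y +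
      (-1 : ℂ) ^ (ℓ + r + 1) *
        ∑ k ∈ Finset.range (ℓ + r),
          ((ℓ + r).choose k : ℂ) * ((n + k + r).choose r : ℂ) * x ^ (ℓ + r - k) *
            (genBernoulliPoly α (n + k)).eval z =
    (-1 : ℂ) ^ n * ((ℓ + n + 2 * r).choose r : ℂ) *
      ((genBernoulliPoly α (n + ℓ + r)).eval (x + y) -
        (genBernoulliPoly α (n + ℓ + r)).eval y) := by
  set A := appellShift (fun j => (genBernoulliPoly α j).eval y) x
  have hz : ∀ m, (genBernoulliPoly α m).eval z = (-1) ^ m * A m := fun m => by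
    rw [show z = α - (x + y) by linear_combination h, genBernoulliPoly_eval_sub,
      genBernoulliPoly_eval_add]
  have hsign : ∀ k, (-1 : ℂ) ^ (ℓ + r + 1) *
      ((ℓ + r).choose k * (n + k + r).choose r * x ^ (ℓ + r - k) * ((-1) ^ (n + k) * A (n + k))) =
      -(-1) ^ n * ((-1) ^ (ℓ + r + k) * (ℓ + r).choose k * (n + k + r).choose r *
        x ^ (ℓ + r - k) * A (n + k)) := fun k => by ring
  have key := sum_choose_mul_choose_mul_shift_eq_sum_mul_appellShift
    (fun j => (genBernoulliPoly α j).eval y) x ℓ n r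
  rw [sum_range_succ, sum_range_succ, Nat.choose_self, Nat.choose_self, Nat.sub_self,
    Nat.sub_self, Even.neg_one_pow ⟨ℓ + r, rfl⟩, show ℓ + (n + r) = n + ℓ + r by ring,
    show n + (ℓ + r) = n + ℓ + r by ring, show n + ℓ + r + r = ℓ + n + 2 * r by ring] at key
  rw [genBernoulliPoly_eval_add]
  simp only [hz, mul_sum, hsign]
  rw [← mul_sum, ← mul_sum]
  linear_combination (-1) ^ n * key

/-- If `x + y + z = α` and `r ≥ 1`, then
`(-1)^n ∑_{k=0}^{n+r-1} C(n+r,k) C(ℓ+k+r,r) x^{n+r-k} B_{ℓ+k}^{(α)}(y)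
 + (-1)^{ℓ+r+1} ∑_{k=0}^{ℓ+r-1} C(ℓ+r,k) C(n+k+r,r) x^{ℓ+r-k} B_{n+k}^{(α)}(z)
 = (-1)^n C(ℓ+n+2r,r) ( B_{n+ℓ+r}^{(α)}(x+y) - B_{n+ℓ+r}^{(α)}(y) )`. -/
theorem truncated_symmetry_identity (α x y z : ℂ) (h : x + y + z = α) (ℓ n r : ℕ)
    (hr : 1 ≤ r) :
    (-1 : ℂ) ^ n *
        ∑ k ∈ Finset.range (n + r),
          ((n + r).choose k : ℂ) * ((ℓ + k + r).choose r : ℂ) * x ^ (n + r - k) *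
            (genBernoulliPoly α (ℓ + k)).eval y +
      (-1 : ℂ) ^ (ℓ + r + 1) *
        ∑ k ∈ Finset.range (ℓ + r),
          ((ℓ + r).choose k : ℂ) * ((n + k + r).choose r : ℂ) * x ^ (ℓ + r - k) *
            (genBernoulliPoly α (n + k)).eval z =
    (-1 : ℂ) ^ n * ((ℓ + n + 2 * r).choose r : ℂ) *
      ((genBernoulliPoly α (n + ℓ + r)).eval (x + y) -
        (genBernoulliPoly α (n + ℓ + r)).eval y) :=
  truncated_symmetry_identity_general α x y z h ℓ n r
end

section
/- Let t ∈ ℂ, let ℓ, n be natural numbers and let r ≥ 1 be a natural number. Then (−1)^n Σ_{k=0}^{n+r−1} C(n+r,k) C(ℓ+k+r,r) B_{ℓ+k}(t) + (−1)^{ℓ+r+1} Σ_{k=0}^{ℓ+r−1} C(ℓ+r,k) C(n+k+r,r) B_{n+k}(−t) = (−1)^n C(n+ℓ+2r,r) (n+ℓ+r) t^{n+ℓ+r−1}. -/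
open scoped BigOperators
open Finset

/-!
Since `C(m+r, r) B_m` is the `r`-th Hasse derivative of `B_{m+r}`, the identity is the `r`-th
Hasse derivative of its case `r = 0`. That case is Sun's symmetric identity
`(-1)^m ∑_{k ≤ m} C(m,k) B_{n+k}(x) = (-1)^n ∑_{k ≤ n} C(n,k) B_{m+k}(-x)` with the two top terms
moved to the right, where they combine to `(-1)^m (m+n) x^{m+n-1}` by
`B_j(-x) = (-1)^j (B_j(x) + j x^{j-1})`. Sun's identity follows by induction on `m`: by Pascal's
rule both sides satisfy `S(m+1, n) = -S(m, n) - S(m, n+1)`, and for `m = 0` it is the reflection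
formula `B_n(1-x) = (-1)^n B_n(x)`.
-/

theorem Finset.sum_range_succ_choose_smul {R M : Type*} [Semiring R] [AddCommMonoid M]
    [Module R M] (f : ℕ → M) (m : ℕ) :
    ∑ k ∈ range (m + 2), ((m + 1).choose k : R) • f k =
      ∑ k ∈ range (m + 1), (m.choose k : R) • f k +
        ∑ k ∈ range (m + 1), (m.choose k : R) • f (k + 1) := by
  have hshift : ∑ k ∈ range (m + 1), (m.choose (k + 1) : R) • f (k + 1) + f 0 =
      ∑ k ∈ range (m + 1), (m.choose k : R) • f k := by
    rw [sum_range_succ, sum_range_succ' (fun k => (m.choose k : R) • f k)]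
    simp
  rw [sum_range_succ', ← hshift]
  simp only [Nat.choose_succ_succ', Nat.cast_add, add_smul, sum_add_distrib,
    Nat.choose_zero_right, Nat.cast_one, one_smul]
  abel

theorem Nat.mul_sub_one_choose (M r : ℕ) : M * (M - 1).choose r = M.choose r * (M - r) := by
  cases M with
  | zero => simp
  | succ M => simpa [mul_comm] using Nat.choose_mul_succ_eq M r

namespace Polynomial

theorem monomial_comp_neg_X {R : Type*} [CommRing R] (n : ℕ) (a : R) :
    (monomial n a).comp (-X) = monomial n ((-1) ^ n * a) := by
  rw [monomial_comp, neg_pow, ← C_mul_X_pow_eq_monomial]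
  simp only [map_mul, map_pow, map_neg, map_one]
  ring

theorem hasseDeriv_comp_neg_X {R : Type*} [CommRing R] (r : ℕ) (p : R[X]) :
    hasseDeriv r (p.comp (-X)) = (-1 : R) ^ r • (hasseDeriv r p).comp (-X) := by
  induction p using Polynomial.induction_on' with
  | add p q hp hq => rw [add_comp, map_add, hp, hq, map_add, add_comp, smul_add]
  | monomial n a =>
    rw [monomial_comp_neg_X, hasseDeriv_monomial, hasseDeriv_monomial, monomial_comp_neg_X,
      smul_monomial, smul_eq_mul]
    congr 1
    rcases le_or_gt r n with hrn | hnr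
    · rw [← Nat.add_sub_cancel' hrn, pow_add, Nat.add_sub_cancel_left]
      ring
    · rw [Nat.choose_eq_zero_of_lt hnr]
      ring

theorem sum_range_succ_choose_smul_bernoulli (n : ℕ) :
    ∑ k ∈ range (n + 1), (n.choose k : ℚ) • bernoulli k = (bernoulli n).comp (1 + X) := by
  cases n with
  | zero => simp
  | succ n =>
    rw [sum_range_succ, sum_bernoulli, bernoulli_comp_one_add_X, Nat.choose_self, Nat.cast_one,
      one_smul, ← C_mul_X_pow_eq_monomial, nsmul_eq_mul, add_tsub_cancel_right]
    simp only [map_add, map_natCast, map_one, Nat.cast_add, Nat.cast_one]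
    ring

theorem sum_range_succ_choose_smul_bernoulli_comp_neg_X (n : ℕ) :
    ∑ k ∈ range (n + 1), (n.choose k : ℚ) • (bernoulli k).comp (-X) =
      (-1 : ℚ) ^ n • bernoulli n := by
  simp_rw [← smul_comp, ← sum_comp, sum_range_succ_choose_smul_bernoulli, comp_assoc]
  rw [add_comp, one_comp, X_comp, ← sub_eq_add_neg, bernoulli_comp_one_sub_X, smul_eq_C_mul]
  simp

theorem bernoulli_symmetric_sum (m n : ℕ) :
    (-1 : ℚ) ^ m • ∑ k ∈ range (m + 1), (m.choose k : ℚ) • bernoulli (n + k) =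
      (-1 : ℚ) ^ n • ∑ k ∈ range (n + 1), (n.choose k : ℚ) • (bernoulli (m + k)).comp (-X) := by
  induction m generalizing n with
  | zero =>
    simp [sum_range_succ_choose_smul_bernoulli_comp_neg_X, smul_smul, ← pow_add]
  | succ m ih =>
    have h₁ := ih n
    have h₂ := ih (n + 1)
    have hT := sum_range_succ_choose_smul (R := ℚ) (fun k => (bernoulli (m + k)).comp (-X)) n
    rw [sum_range_succ_choose_smul]
    simp only [add_assoc, add_comm 1] at h₂ hT ⊢
    linear_combination (norm := module) -h₁ - h₂ - (-1 : ℚ) ^ (n + 1) • hT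

theorem bernoulli_symmetric_sum_trunc (N L : ℕ) :
    (-1 : ℚ) ^ N • ∑ k ∈ range N, (N.choose k : ℚ) • bernoulli (L + k) +
        (-1 : ℚ) ^ (L + 1) • ∑ k ∈ range L, (L.choose k : ℚ) • (bernoulli (N + k)).comp (-X) =
      ((-1 : ℚ) ^ N * (N + L : ℕ)) • X ^ (N + L - 1) := by
  have h := bernoulli_symmetric_sum N L
  rw [sum_range_succ, sum_range_succ, Nat.choose_self, Nat.choose_self, Nat.cast_one, one_smul,
    one_smul, bernoulli_comp_neg_X, add_comm L N, ← Nat.cast_smul_eq_nsmul ℚ, pow_add] at h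
  have hL : (-1 : ℚ) ^ L * (-1) ^ L = 1 := by rw [← mul_pow]; norm_num
  linear_combination (norm := module) h +
    hL • ((-1 : ℚ) ^ N • (bernoulli (N + L) + ((N + L : ℕ) : ℚ) • X ^ (N + L - 1)))

theorem iterate_derivative_bernoulli_add (m r : ℕ) :
    derivative^[r] (bernoulli (m + r)) = ((m + r).descFactorial r : ℚ) • bernoulli m := by
  induction r with
  | zero => simp
  | succ r ih =>
    rw [Function.iterate_succ_apply, ← add_assoc, derivative_bernoulli, add_tsub_cancel_right,
      iterate_derivative_natCast_mul, ih, Nat.succ_descFactorial_succ, Nat.cast_mul,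
      ← nsmul_eq_mul, mul_smul, Nat.cast_smul_eq_nsmul, Nat.cast_smul_eq_nsmul]

theorem hasseDeriv_bernoulli_add (m r : ℕ) :
    hasseDeriv r (bernoulli (m + r)) = ((m + r).choose r : ℚ) • bernoulli m := by
  have h := congrFun (factorial_smul_hasseDeriv (R := ℚ) (k := r)) (bernoulli (m + r))
  rw [iterate_derivative_bernoulli_add, Nat.descFactorial_eq_factorial_mul_choose, Nat.cast_mul,
    mul_smul, Nat.cast_smul_eq_nsmul] at h
  exact nsmul_right_injective (Nat.factorial_ne_zero r) h

theorem hasseDeriv_sum_choose_smul_bernoulli (N ℓ r : ℕ) :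
    hasseDeriv r (∑ k ∈ range N, (N.choose k : ℚ) • bernoulli (ℓ + r + k)) =
      ∑ k ∈ range N, ((N.choose k : ℚ) * ((ℓ + k + r).choose r : ℚ)) • bernoulli (ℓ + k) := by
  rw [map_sum]
  refine sum_congr rfl fun k _ => ?_
  rw [map_smul, add_right_comm, hasseDeriv_bernoulli_add, smul_smul]

theorem hasseDeriv_sum_choose_smul_bernoulli_comp_neg_X (L n r : ℕ) :
    hasseDeriv r (∑ k ∈ range L, (L.choose k : ℚ) • (bernoulli (n + r + k)).comp (-X)) =
      (-1 : ℚ) ^ r • ∑ k ∈ range L,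
        ((L.choose k : ℚ) * ((n + k + r).choose r : ℚ)) • (bernoulli (n + k)).comp (-X) := by
  rw [map_sum, smul_sum]
  refine sum_congr rfl fun k _ => ?_
  rw [map_smul, hasseDeriv_comp_neg_X, add_right_comm, hasseDeriv_bernoulli_add, smul_comp]
  module

theorem bernoulli_symmetric_sum_choose (n ℓ r : ℕ) :
    (-1 : ℚ) ^ n • ∑ k ∈ range (n + r),
          (((n + r).choose k : ℚ) * ((ℓ + k + r).choose r : ℚ)) • bernoulli (ℓ + k) +
        (-1 : ℚ) ^ (ℓ + r + 1) • ∑ k ∈ range (ℓ + r),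
          (((ℓ + r).choose k : ℚ) * ((n + k + r).choose r : ℚ)) • (bernoulli (n + k)).comp (-X) =
      ((-1 : ℚ) ^ n * ((n + ℓ + 2 * r).choose r : ℚ) * (n + ℓ + r : ℕ)) •
        X ^ (n + ℓ + r - 1) := by
  have h := congrArg (fun p => (-1 : ℚ) ^ r • hasseDeriv r p)
    (bernoulli_symmetric_sum_trunc (n + r) (ℓ + r))
  have hexp : n + r + (ℓ + r) - 1 - r = n + ℓ + r - 1 := by omega
  simp only [map_add, map_smul, hasseDeriv_sum_choose_smul_bernoulli,
    hasseDeriv_sum_choose_smul_bernoulli_comp_neg_X, ← monomial_one_right_eq_X_pow,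
    hasseDeriv_monomial] at h
  rw [hexp, mul_one, ← smul_X_eq_monomial, pow_add] at h
  have hcoef : ((n + r + (ℓ + r) : ℕ) : ℚ) * ((n + r + (ℓ + r) - 1).choose r : ℚ) =
      ((n + ℓ + 2 * r).choose r : ℚ) * (n + ℓ + r : ℕ) := by
    rw [← Nat.cast_mul, ← Nat.cast_mul, Nat.mul_sub_one_choose,
      show n + r + (ℓ + r) = n + ℓ + 2 * r by ring, show n + ℓ + 2 * r - r = n + ℓ + r by omega]
  have hr : (-1 : ℚ) ^ r * (-1) ^ r = 1 := by rw [← mul_pow]; norm_num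
  set S₁ := ∑ k ∈ range (n + r),
    (((n + r).choose k : ℚ) * ((ℓ + k + r).choose r : ℚ)) • bernoulli (ℓ + k)
  set S₂ := ∑ k ∈ range (ℓ + r),
    (((ℓ + r).choose k : ℚ) * ((n + k + r).choose r : ℚ)) • (bernoulli (n + k)).comp (-X)
  linear_combination (norm := module) h - hr • ((-1 : ℚ) ^ n • S₁ + (-1 : ℚ) ^ (ℓ + r + 1) • S₂ -
      ((-1 : ℚ) ^ n * ((n + ℓ + 2 * r).choose r : ℚ) * (n + ℓ + r : ℕ)) • X ^ (n + ℓ + r - 1)) +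
    hcoef • (((-1 : ℚ) ^ r * (-1) ^ r * (-1) ^ n) • X ^ (n + ℓ + r - 1))

end Polynomial

theorem wu_sun_pan_generalization_general (t : ℂ) (ℓ n r : ℕ) :
    (-1 : ℂ) ^ n *
        ∑ k ∈ Finset.range (n + r),
          ((n + r).choose k : ℂ) * ((ℓ + k + r).choose r : ℂ) * bernPoly (ℓ + k) t +
      (-1 : ℂ) ^ (ℓ + r + 1) *
        ∑ k ∈ Finset.range (ℓ + r),
          ((ℓ + r).choose k : ℂ) * ((n + k + r).choose r : ℂ) * bernPoly (n + k) (-t) =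
    (-1 : ℂ) ^ n * ((n + ℓ + 2 * r).choose r : ℂ) * ((n : ℂ) + (ℓ : ℂ) + (r : ℂ)) *
      t ^ (n + ℓ + r - 1) := by
  have h := congrArg (Polynomial.aeval t) (Polynomial.bernoulli_symmetric_sum_choose n ℓ r)
  simp only [map_add, map_smul, map_sum, Polynomial.aeval_comp, map_neg, Polynomial.aeval_X,
    Polynomial.aeval_X_pow, Rat.smul_def] at h
  simp only [bernPoly]
  push_cast at h ⊢
  exact h

/-- For `t ∈ ℂ`, `ℓ, n ∈ ℕ` and `r ≥ 1`:
`(-1)^n ∑_{k=0}^{n+r-1} C(n+r,k) C(ℓ+k+r,r) B_{ℓ+k}(t)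
 + (-1)^{ℓ+r+1} ∑_{k=0}^{ℓ+r-1} C(ℓ+r,k) C(n+k+r,r) B_{n+k}(-t)
 = (-1)^n C(n+ℓ+2r,r) (n+ℓ+r) t^{n+ℓ+r-1}`. -/
theorem wu_sun_pan_generalization (t : ℂ) (ℓ n r : ℕ) (hr : 1 ≤ r) :
    (-1 : ℂ) ^ n *
        ∑ k ∈ Finset.range (n + r),
          ((n + r).choose k : ℂ) * ((ℓ + k + r).choose r : ℂ) * bernPoly (ℓ + k) t +
      (-1 : ℂ) ^ (ℓ + r + 1) *
        ∑ k ∈ Finset.range (ℓ + r),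
          ((ℓ + r).choose k : ℂ) * ((n + k + r).choose r : ℂ) * bernPoly (n + k) (-t) =
    (-1 : ℂ) ^ n * ((n + ℓ + 2 * r).choose r : ℂ) * ((n : ℂ) + (ℓ : ℂ) + (r : ℂ)) *
      t ^ (n + ℓ + r - 1) :=
  wu_sun_pan_generalization_general t ℓ n r
end

section
/- Let n be a natural number and let r be an odd natural number. Then Σ_{k=n}^{2n+r} C(n+r,k−n) C(k+r,r) B_k / 2^k = ( (−1)^{n+(r−1)/2} (r+1) / 2^{2n+r+1} ) · C(n+r,(r+1)/2). -/
/-!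
Let `U p = ∑ₖ pₖ Bₖ` be the umbral evaluation reading `Xᵏ` as `Bₖ`. Because
`Bₖ(1) = (-1)ᵏ Bₖ = Bₖ + [k = 1]`, both `U (p(X + 1))` and `U (p(-X))` equal `U p + p'(0)`.
For the even polynomial `K = (X² - 1)ᵐ`, `m = n + r`, and odd `r`, the derivative `q = K⁽ʳ⁾` is
odd, so `2 U (q(X + 1)) = q'(0) = (r + 1)! [X^(r+1)] K`, a signed binomial coefficient. On the
other hand `K(X + 1) = Xᵐ (X + 2)ᵐ`, and expanding `U (q(X + 1))` coefficientwise gives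
`r! 2^(2n+r)` times the left-hand side.
-/

open Finset

section UmbralBernoulli

open Polynomial hiding bernoulli

theorem bernoulli'_eq_bernoulli_add (k : ℕ) :
    bernoulli' k = bernoulli k + if k = 1 then 1 else 0 := by
  by_cases hk : k = 1
  · subst hk
    norm_num [bernoulli'_one, _root_.bernoulli_one]
  · simp [hk, bernoulli_eq_bernoulli'_of_ne_one hk]

theorem iterate_derivative_comp_X_add_C {R : Type*} [CommSemiring R] (p : R[X]) (c : R) (k : ℕ) :
    derivative^[k] (p.comp (X + C c)) = (derivative^[k] p).comp (X + C c) := by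
  induction k generalizing p with
  | zero => rfl
  | succ k ih => simp [derivative_comp, ih]

theorem iterate_derivative_comp_neg_X {R : Type*} [CommRing R] (p : R[X]) (k : ℕ) :
    derivative^[k] (p.comp (-X)) = (-1) ^ k * (derivative^[k] p).comp (-X) := by
  induction k generalizing p with
  | zero => simp
  | succ k ih =>
    rw [Function.iterate_succ_apply, derivative_comp, derivative_neg, derivative_X, neg_one_mul,
      iterate_derivative_neg, ih, Function.iterate_succ_apply, pow_succ]
    ring

noncomputable def umbralBernoulli : ℚ[X] →ₗ[ℚ] ℚ :=
  lsum fun k => bernoulli k • LinearMap.id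

theorem umbralBernoulli_monomial (k : ℕ) (a : ℚ) :
    umbralBernoulli (monomial k a) = a * bernoulli k := by
  simp [umbralBernoulli, mul_comm]

theorem umbralBernoulli_eq_sum {p : ℚ[X]} {s : Finset ℕ} (h : ∀ k ∉ s, p.coeff k = 0) :
    umbralBernoulli p = ∑ k ∈ s, p.coeff k * bernoulli k := by
  have hsupp : p.support ⊆ s := fun k hk => by
    by_contra hks
    exact mem_support_iff.mp hk (h k hks)
  simp only [umbralBernoulli, lsum_apply, LinearMap.smul_apply, LinearMap.id_apply, smul_eq_mul]
  rw [sum_eq_of_subset _ (fun _ => mul_zero _) hsupp]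
  simp_rw [mul_comm]

theorem umbralBernoulli_comp_X_add_one (p : ℚ[X]) :
    umbralBernoulli (p.comp (X + 1)) = umbralBernoulli p + p.coeff 1 := by
  induction p using Polynomial.induction_on' with
  | add p q hp hq =>
    simp only [add_comp, map_add, coeff_add, hp, hq]
    ring
  | monomial k a =>
    have hsum : umbralBernoulli ((X + 1 : ℚ[X]) ^ k)
        = ∑ i ∈ range (k + 1), (k.choose i : ℚ) * bernoulli i := by
      rw [umbralBernoulli_eq_sum (s := range (k + 1))]
      · simp [coeff_X_add_one_pow]
      · intro i hi
        rw [coeff_X_add_one_pow, Nat.choose_eq_zero_of_lt (by simpa using hi), Nat.cast_zero]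
    rw [umbralBernoulli_monomial, coeff_monomial, ← C_mul_X_pow_eq_monomial, mul_comp, C_comp,
      X_pow_comp, ← smul_eq_C_mul, map_smul, hsum, sum_range_succ, _root_.sum_bernoulli,
      Nat.choose_self, Nat.cast_one, smul_eq_mul]
    split_ifs <;> ring

theorem umbralBernoulli_comp_neg_X (p : ℚ[X]) :
    umbralBernoulli (p.comp (-X)) = umbralBernoulli p + p.coeff 1 := by
  induction p using Polynomial.induction_on' with
  | add p q hp hq =>
    simp only [add_comp, map_add, coeff_add, hp, hq]
    ring
  | monomial k a =>
    have hcomp : (monomial k a).comp (-X) = monomial k (a * (-1) ^ k) := by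
      rw [← C_mul_X_pow_eq_monomial, ← C_mul_X_pow_eq_monomial, mul_comp, C_comp, X_pow_comp,
        neg_pow, C_mul, C_pow, C_neg, C_1]
      ring
    rw [hcomp, umbralBernoulli_monomial, umbralBernoulli_monomial, mul_assoc,
      ← bernoulli'_eq_bernoulli, bernoulli'_eq_bernoulli_add, coeff_monomial]
    split_ifs <;> ring

theorem two_mul_umbralBernoulli_of_comp_neg_X {q : ℚ[X]} (hq : q.comp (-X) = -q) :
    2 * umbralBernoulli q = -q.coeff 1 := by
  have h := umbralBernoulli_comp_neg_X q
  rw [hq, map_neg] at h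
  linarith

theorem two_mul_umbralBernoulli_iterate_derivative_comp_X_add_one {K : ℚ[X]}
    (hK : K.comp (-X) = K) {r : ℕ} (hr : Odd r) :
    2 * umbralBernoulli (derivative^[r] (K.comp (X + 1)))
      = (r + 1).factorial * K.coeff (r + 1) := by
  have hodd : (derivative^[r] K).comp (-X) = -derivative^[r] K := by
    have h := iterate_derivative_comp_neg_X K r
    rw [hK, hr.neg_one_pow, neg_one_mul] at h
    exact neg_eq_iff_eq_neg.mp h.symm
  have hshift : derivative^[r] (K.comp (X + 1)) = (derivative^[r] K).comp (X + 1) := by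
    simpa using iterate_derivative_comp_X_add_C K 1 r
  have hcoeff : (derivative^[r] K).coeff 1 = (r + 1).factorial * K.coeff (r + 1) := by
    rw [coeff_iterate_derivative, add_comm 1 r, Nat.descFactorial_eq_factorial_mul_choose,
      Nat.choose_succ_self_right, nsmul_eq_mul, Nat.factorial_succ]
    push_cast
    ring
  rw [hshift, umbralBernoulli_comp_X_add_one, mul_add, two_mul_umbralBernoulli_of_comp_neg_X hodd,
    hcoeff]
  ring

theorem umbralBernoulli_iterate_derivative {p : ℚ[X]} {r : ℕ} {s : Finset ℕ}
    (h : ∀ k ∉ s, p.coeff (k + r) = 0) :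
    umbralBernoulli (derivative^[r] p)
      = r.factorial * ∑ k ∈ s, ((k + r).choose r : ℚ) * p.coeff (k + r) * bernoulli k := by
  rw [umbralBernoulli_eq_sum (s := s) fun k hk => by
    rw [coeff_iterate_derivative, h k hk, smul_zero], Finset.mul_sum]
  refine Finset.sum_congr rfl fun k _ => ?_
  rw [coeff_iterate_derivative, Nat.descFactorial_eq_factorial_mul_choose, nsmul_eq_mul]
  push_cast
  ring

theorem X_sq_sub_one_pow_comp_neg_X {R : Type*} [CommRing R] (m : ℕ) :
    ((X ^ 2 - 1 : R[X]) ^ m).comp (-X) = (X ^ 2 - 1) ^ m := by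
  simp [pow_comp, sub_comp]

theorem X_sq_sub_one_pow_comp_X_add_one {R : Type*} [CommRing R] (m : ℕ) :
    ((X ^ 2 - 1 : R[X]) ^ m).comp (X + 1) = X ^ m * (X + C 2) ^ m := by
  rw [pow_comp, ← mul_pow]
  congr 1
  simp only [sub_comp, pow_comp, X_comp, one_comp, C_ofNat]
  ring

theorem coeff_X_sq_sub_one_pow {R : Type*} [CommRing R] (m j : ℕ) :
    ((X ^ 2 - 1 : R[X]) ^ m).coeff (2 * j) = (-1) ^ (m - j) * m.choose j := by
  have h : (X ^ 2 - 1 : R[X]) ^ m = expand R 2 ((X + C (-1)) ^ m) := by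
    simp [sub_eq_add_neg]
  rw [h, coeff_expand_mul' two_pos, coeff_X_add_C_pow]

theorem coeff_X_pow_mul_X_add_C_pow {R : Type*} [CommSemiring R] (c : R) (n r k : ℕ) :
    (X ^ (n + r) * (X + C c) ^ (n + r)).coeff (k + r)
      = if n ≤ k then c ^ (n + r - (k - n)) * (n + r).choose (k - n) else 0 := by
  rw [coeff_X_pow_mul', Nat.add_sub_add_right, coeff_X_add_C_pow]
  simp only [Nat.add_le_add_iff_right]

theorem umbralBernoulli_iterate_derivative_X_sq_sub_one_pow_comp (n r : ℕ) :
    umbralBernoulli (derivative^[r] (((X ^ 2 - 1 : ℚ[X]) ^ (n + r)).comp (X + 1)))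
      = r.factorial * 2 ^ (2 * n + r) * ∑ k ∈ Icc n (2 * n + r),
          ((n + r).choose (k - n) : ℚ) * ((k + r).choose r : ℚ) * bernoulli k / 2 ^ k := by
  rw [X_sq_sub_one_pow_comp_X_add_one,
    umbralBernoulli_iterate_derivative (s := Icc n (2 * n + r)), mul_assoc]
  · congr 1
    rw [Finset.mul_sum]
    refine Finset.sum_congr rfl fun k hk => ?_
    obtain ⟨hnk, hkn⟩ := Finset.mem_Icc.mp hk
    rw [coeff_X_pow_mul_X_add_C_pow, if_pos hnk,
      show 2 * n + r = (n + r - (k - n)) + k by omega, pow_add]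
    field_simp
  · intro k hk
    rw [coeff_X_pow_mul_X_add_C_pow]
    rcases Nat.lt_or_ge k n with hkn | hnk
    · rw [if_neg (by omega)]
    · rw [if_pos hnk, Nat.choose_eq_zero_of_lt (by simp at hk; omega), Nat.cast_zero, mul_zero]

theorem two_mul_umbralBernoulli_iterate_derivative_X_sq_sub_one_pow_comp (n : ℕ) {r : ℕ}
    (hr : Odd r) :
    2 * umbralBernoulli (derivative^[r] (((X ^ 2 - 1 : ℚ[X]) ^ (n + r)).comp (X + 1)))
      = (r + 1).factorial * (-1) ^ (n + (r - 1) / 2) * (n + r).choose ((r + 1) / 2) := by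
  rw [two_mul_umbralBernoulli_iterate_derivative_comp_X_add_one
    (X_sq_sub_one_pow_comp_neg_X _) hr]
  obtain ⟨s, rfl⟩ := hr
  rw [show (2 * s + 1 - 1) / 2 = s by omega, show (2 * s + 1 + 1) / 2 = s + 1 by omega,
    show 2 * s + 1 + 1 = 2 * (s + 1) by ring, coeff_X_sq_sub_one_pow,
    show n + (2 * s + 1) - (s + 1) = n + s by omega]
  ring

end UmbralBernoulli

/-- For `n ∈ ℕ` and `r` odd:
`∑_{k=n}^{2n+r} C(n+r,k-n) C(k+r,r) B_k / 2^k
 = ((-1)^{n+(r-1)/2} (r+1) / 2^{2n+r+1}) C(n+r,(r+1)/2)`. -/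
theorem chang_ha_number_identity (n r : ℕ) (hr : Odd r) :
    ∑ k ∈ Finset.Icc n (2 * n + r),
        ((n + r).choose (k - n) : ℚ) * ((k + r).choose r : ℚ) * bernoulli k / 2 ^ k =
    (-1 : ℚ) ^ (n + (r - 1) / 2) * ((r : ℚ) + 1) / 2 ^ (2 * n + r + 1) *
      ((n + r).choose ((r + 1) / 2) : ℚ) := by
  have h := two_mul_umbralBernoulli_iterate_derivative_X_sq_sub_one_pow_comp n hr
  rw [umbralBernoulli_iterate_derivative_X_sq_sub_one_pow_comp, Nat.factorial_succ] at h
  push_cast at h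
  have hfac : (r.factorial : ℚ) ≠ 0 := by positivity
  field_simp
  rw [pow_succ]
  apply mul_left_cancel₀ hfac
  linear_combination h
end
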